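/- arXiv:1304.3780 — 4 statements merged into one kernel-verified Lean document; each statement's English description precedes it below -/
import Mathlib

section
/- Let n ≥ 1 and let h : (Fin n → Fin 3) → ℝ satisfy h(C) = 0 and h(s) = 1 + (1/deg s)·Σ_{t adjacent to s} h(t) for every state s ≠ C of the Hanoi graph H_n. Then h(A) = (3^n − 1)·(5^n − 3^n)/(2·3^(n−1)). (This is the expected number of random moves to transfer all n disks from the first peg to the third peg.) -/
/-- The Hanoi graph `H_n`: vertices are states `s : Fin n → Fin 3` (`s k` is the peg
holding the disk of size `k+1`); two distinct states are adjacent iff a single disk moves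
and it is topmost on both its source and destination pegs. -/
def hanoi (n : ℕ) : SimpleGraph (Fin n → Fin 3) where
  Adj s t := ∃ k : Fin n, (∀ j, j ≠ k → s j = t j) ∧ s k ≠ t k ∧
    ∀ j, j < k → s j ≠ s k ∧ s j ≠ t k
  symm := by
    constructor
    rintro s t ⟨k, h1, h2, h3⟩
    refine ⟨k, fun j hj => (h1 j hj).symm, h2.symm, fun j hj => ?_⟩
    rw [← h1 j hj.ne]
    exact ⟨(h3 j hj).2, (h3 j hj).1⟩
  loopless := by
    constructor
    rintro s ⟨k, _, h2, _⟩
    exact h2 rfl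

instance hanoiAdjDecidable (n : ℕ) : DecidableRel (hanoi n).Adj := fun s t =>
  inferInstanceAs (Decidable (∃ k : Fin n, (∀ j, j ≠ k → s j = t j) ∧ s k ≠ t k ∧
    ∀ j, j < k → s j ≠ s k ∧ s j ≠ t k))

/-- The corner state with all disks on peg `p`. -/
def corner (n : ℕ) (p : Fin 3) : Fin n → Fin 3 := fun _ => p

/-- The state `s½`: the largest disk on the second peg, all other disks on the first peg. -/
def halfState (n : ℕ) : Fin n → Fin 3 := fun k => if (k : ℕ) < n - 1 then 0 else 1

namespace HanoiAux

abbrev V (n : ℕ) := Fin n → Fin 3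

/-- corner-to-corner effective resistance -/
noncomputable def rr (n : ℕ) : ℝ := ((5:ℝ)^n - 3^n) / 3^n

def third (a b : Fin 3) : Fin 3 := -(a+b)

/-- voltage function: unit current from corner 0 to corner 2, zero at corner 2 -/
noncomputable def phi : (n : ℕ) → V n → ℝ
  | 0, _ => 0
  | (n+1), s =>
      if s (Fin.last n) = 0 then
        (2/3) * phi n (Equiv.swap 1 2 ∘ Fin.init s) + (1/3) * phi n (Fin.init s)
          + (2/3) * rr n + 2/3
      else if s (Fin.last n) = 1 then
        (1/3) * phi n (Equiv.swap 0 2 ∘ Fin.init s) + (2/3) * rr n + 1/3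
      else
        (1/3) * phi n (Fin.init s) + (2/3) * phi n (Equiv.swap 0 1 ∘ Fin.init s)

lemma rr_succ (n : ℕ) : rr (n+1) = (5 * rr n + 2) / 3 := by
  have h3 : (3:ℝ)^n ≠ 0 := by positivity
  unfold rr
  field_simp [rr, pow_succ]
  ring

lemma phi_snoc0 {n : ℕ} (s : V n) : phi (n+1) (Fin.snoc s 0) =
    (2/3) * phi n (Equiv.swap 1 2 ∘ s) + (1/3) * phi n s + (2/3) * rr n + 2/3 := by
  simp [phi, Fin.snoc_last, Fin.init_snoc]

lemma phi_snoc1 {n : ℕ} (s : V n) : phi (n+1) (Fin.snoc s 1) =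
    (1/3) * phi n (Equiv.swap 0 2 ∘ s) + (2/3) * rr n + 1/3 := by
  simp [phi, Fin.snoc_last, Fin.init_snoc]

lemma phi_snoc2 {n : ℕ} (s : V n) : phi (n+1) (Fin.snoc s 2) =
    (1/3) * phi n s + (2/3) * phi n (Equiv.swap 0 1 ∘ s) := by
  simp [phi, Fin.snoc_last, Fin.init_snoc]

lemma adj_mono {n : ℕ} (π : Equiv.Perm (Fin 3)) {s t : V n} (h : (hanoi n).Adj s t) :
    (hanoi n).Adj (π ∘ s) (π ∘ t) := by
  obtain ⟨k, h1, h2, h3⟩ := h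
  exact ⟨k, fun j hj => congrArg π (h1 j hj), fun e => h2 (π.injective e),
    fun j hj => ⟨fun e => (h3 j hj).1 (π.injective e), fun e => (h3 j hj).2 (π.injective e)⟩⟩

lemma adj_comp {n : ℕ} (π : Equiv.Perm (Fin 3)) (s t : V n) :
    (hanoi n).Adj (π ∘ s) (π ∘ t) ↔ (hanoi n).Adj s t := by
  constructor
  · intro h
    have h2 := adj_mono π⁻¹ h
    simpa [← Function.comp_assoc, Equiv.Perm.inv_def, Equiv.symm_comp_self] using h2
  · exact adj_mono π

def compEquiv (n : ℕ) (π : Equiv.Perm (Fin 3)) : V n ≃ V n :=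
  Equiv.arrowCongr (Equiv.refl (Fin n)) π

lemma compEquiv_apply (n : ℕ) (π : Equiv.Perm (Fin 3)) (s : V n) :
    compEquiv n π s = π ∘ s := rfl

lemma sum_nbhd {n : ℕ} {M : Type*} [AddCommMonoid M] (v : V n) (f : V n → M) :
    ∑ t ∈ (hanoi n).neighborFinset v, f t
      = ∑ t : V n, if (hanoi n).Adj v t then f t else 0 := by
  rw [SimpleGraph.neighborFinset_eq_filter, Finset.sum_filter]

lemma sum_neighbors_comp {n : ℕ} {M : Type*} [AddCommMonoid M] (π : Equiv.Perm (Fin 3))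
    (s : V n) (f : V n → M) :
    ∑ t ∈ (hanoi n).neighborFinset (π ∘ s), f t
      = ∑ t ∈ (hanoi n).neighborFinset s, f (π ∘ t) := by
  rw [sum_nbhd, sum_nbhd]
  refine (Fintype.sum_equiv (compEquiv n π) _ _ fun t => ?_).symm
  simp only [compEquiv_apply, adj_comp]

lemma degree_comp {n : ℕ} (π : Equiv.Perm (Fin 3)) (s : V n) :
    (hanoi n).degree (π ∘ s) = (hanoi n).degree s := by
  classical
  unfold SimpleGraph.degree
  rw [Finset.card_eq_sum_ones, Finset.card_eq_sum_ones]
  exact sum_neighbors_comp π s (fun _ => 1)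

end HanoiAux
namespace HanoiAux

lemma snoc_inj {n : ℕ} {s t : V n} {p q : Fin 3} :
    (Fin.snoc s p : V (n+1)) = Fin.snoc t q ↔ s = t ∧ p = q := by
  constructor
  · intro h
    constructor
    · funext j
      have := congrFun h j.castSucc
      simpa [Fin.snoc_castSucc] using this
    · have := congrFun h (Fin.last n)
      simpa [Fin.snoc_last] using this
  · rintro ⟨rfl, rfl⟩; rfl

lemma corner_snoc (n : ℕ) (c : Fin 3) :
    corner (n+1) c = Fin.snoc (corner n c) c := by
  funext j
  refine Fin.lastCases ?_ (fun i => ?_) j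
  · simp [corner, Fin.snoc_last]
  · simp [corner, Fin.snoc_castSucc]

lemma adj_snoc {n : ℕ} (s t : V n) (p q : Fin 3) :
    (hanoi (n+1)).Adj (Fin.snoc s p) (Fin.snoc t q) ↔
      (p = q ∧ (hanoi n).Adj s t) ∨
      (s = t ∧ p ≠ q ∧ ∀ j : Fin n, s j ≠ p ∧ s j ≠ q) := by
  constructor
  · rintro ⟨k, h1, h2, h3⟩
    induction k using Fin.lastCases with
    | last =>
      right
      refine ⟨funext fun j => ?_, ?_, fun j => ?_⟩
      · have := h1 j.castSucc (Fin.castSucc_lt_last j).ne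
        simpa [Fin.snoc_castSucc] using this
      · simpa [Fin.snoc_last] using h2
      · have := h3 j.castSucc (Fin.castSucc_lt_last j)
        simpa [Fin.snoc_castSucc, Fin.snoc_last] using this
    | cast k =>
      left
      constructor
      · have := h1 (Fin.last n) (Fin.castSucc_lt_last k).ne'
        simpa [Fin.snoc_last] using this
      · refine ⟨k, fun j hj => ?_, ?_, fun j hj => ?_⟩
        · have := h1 j.castSucc (by simpa using hj)
          simpa [Fin.snoc_castSucc] using this
        · simpa [Fin.snoc_castSucc] using h2
        · have := h3 j.castSucc (by simpa using hj)
          simpa [Fin.snoc_castSucc] using this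
  · rintro (⟨rfl, k, h1, h2, h3⟩ | ⟨rfl, hpq, hall⟩)
    · refine ⟨k.castSucc, fun j hj => ?_, ?_, fun j hj => ?_⟩
      · induction j using Fin.lastCases with
        | last => simp [Fin.snoc_last]
        | cast j =>
          have : j ≠ k := by
            intro e; exact hj (by rw [e])
          have := h1 j this
          simp [Fin.snoc_castSucc, this]
      · simpa [Fin.snoc_castSucc] using h2
      · have hj' : j < Fin.last n := lt_trans hj (Fin.castSucc_lt_last k)
        obtain ⟨j', rfl⟩ : ∃ j' : Fin n, j'.castSucc = j := ⟨⟨j, by omega⟩, by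
          simp [Fin.castSucc, Fin.ext_iff]⟩
        have := h3 j' (by simpa using hj)
        simpa [Fin.snoc_castSucc] using this
    · refine ⟨Fin.last n, fun j hj => ?_, by simpa [Fin.snoc_last] using hpq,
        fun j hj => ?_⟩
      · obtain ⟨j', rfl⟩ : ∃ j' : Fin n, j'.castSucc = j := by
          induction j using Fin.lastCases with
          | last => exact absurd rfl hj
          | cast j => exact ⟨j, rfl⟩
        simp [Fin.snoc_castSucc]
      · obtain ⟨j', rfl⟩ : ∃ j' : Fin n, j'.castSucc = j := by
          induction j using Fin.lastCases with
          | last => exact absurd rfl hj.ne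
          | cast j => exact ⟨j, rfl⟩
        simpa [Fin.snoc_castSucc, Fin.snoc_last] using hall j'

def snocEquiv (n : ℕ) : (V n × Fin 3) ≃ V (n+1) where
  toFun x := Fin.snoc x.1 x.2
  invFun s := (Fin.init s, s (Fin.last n))
  left_inv := by
    rintro ⟨s, p⟩
    simp [Fin.init_snoc, Fin.snoc_last]
  right_inv := fun s => Fin.snoc_init_self s

lemma sum_snoc {n : ℕ} {M : Type*} [AddCommMonoid M] (f : V (n+1) → M) :
    ∑ v : V (n+1), f v = ∑ s : V n, ∑ p : Fin 3, f (Fin.snoc s p) := by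
  have h1 : ∑ x : V n × Fin 3, f (Fin.snoc x.1 x.2) = ∑ v : V (n+1), f v :=
    Fintype.sum_equiv (snocEquiv n) _ _ fun x => rfl
  rw [← h1, Fintype.sum_prod_type]

end HanoiAux
namespace HanoiAux

lemma third_spec : ∀ a b q : Fin 3, a ≠ b → (q ≠ a ∧ q ≠ b ↔ q = third a b) := by decide

lemma sum_nbhd_snoc {n : ℕ} {M : Type*} [AddCommMonoid M] (s : V (n+1)) (p : Fin 3)
    (f : V (n+2) → M) :
    ∑ t ∈ (hanoi (n+2)).neighborFinset (Fin.snoc s p), f t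
      = (∑ t ∈ (hanoi (n+1)).neighborFinset s, f (Fin.snoc t p))
        + (if (∀ j, s j = s 0) ∧ s 0 ≠ p then f (Fin.snoc s (third p (s 0))) else 0) := by
  classical
  rw [sum_nbhd, sum_snoc]
  have key : ∀ (t : V (n+1)) (q : Fin 3),
      (if (hanoi (n+2)).Adj (Fin.snoc s p) (Fin.snoc t q) then f (Fin.snoc t q) else 0)
      = (if p = q ∧ (hanoi (n+1)).Adj s t then f (Fin.snoc t q) else 0)
        + (if s = t ∧ p ≠ q ∧ (∀ j, s j ≠ p ∧ s j ≠ q) then f (Fin.snoc t q) else 0) := by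
    intro t q
    by_cases h1 : p = q ∧ (hanoi (n+1)).Adj s t
    · have h2 : ¬ (s = t ∧ p ≠ q ∧ (∀ j, s j ≠ p ∧ s j ≠ q)) := fun h => h.2.1 h1.1
      rw [if_pos h1, if_neg h2, if_pos ((adj_snoc s t p q).mpr (Or.inl h1)), add_zero]
    · by_cases h2 : s = t ∧ p ≠ q ∧ (∀ j, s j ≠ p ∧ s j ≠ q)
      · rw [if_pos h2, if_neg h1, if_pos ((adj_snoc s t p q).mpr (Or.inr h2)), zero_add]
      · rw [if_neg h1, if_neg h2, if_neg (fun h => by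
          rcases (adj_snoc s t p q).mp h with h | h
          · exact h1 h
          · exact h2 h), add_zero]
  simp only [key, Finset.sum_add_distrib]
  congr 1
  · rw [sum_nbhd]
    refine Finset.sum_congr rfl fun t _ => ?_
    simp only [ite_and]
    rw [Finset.sum_ite_eq]
    simp
  · rw [Finset.sum_comm]
    have inner : ∀ q : Fin 3,
        (∑ t : V (n+1), if s = t ∧ p ≠ q ∧ (∀ j, s j ≠ p ∧ s j ≠ q) then f (Fin.snoc t q) else 0)
        = (if p ≠ q ∧ (∀ j, s j ≠ p ∧ s j ≠ q) then f (Fin.snoc s q) else 0) := by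
      intro q
      simp only [ite_and]
      rw [Finset.sum_ite_eq]
      simp
    simp only [inner]
    by_cases hb : (∀ j, s j = s 0) ∧ s 0 ≠ p
    · rw [if_pos hb]
      have hps : p ≠ s 0 := hb.2.symm
      have hq0 : third p (s 0) ≠ p ∧ third p (s 0) ≠ s 0 := (third_spec p (s 0) _ hps).mpr rfl
      refine Finset.sum_eq_single_of_mem (third p (s 0)) (Finset.mem_univ _) ?_ |>.trans ?_
      · intro q _ hq
        rw [if_neg]
        rintro ⟨hpq, hall⟩
        exact hq ((third_spec p (s 0) q hps).mp ⟨fun e => hpq e.symm, fun e => (hall 0).2 (hb.1 0 ▸ e ▸ rfl)⟩)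
      · rw [if_pos ⟨fun e => hq0.1 e.symm, fun j => ⟨fun e => hb.2 ((hb.1 j) ▸ e), fun e => hq0.2 ((hb.1 j) ▸ e).symm⟩⟩]
    · rw [if_neg hb]
      refine Finset.sum_eq_zero fun q _ => ?_
      rw [if_neg]
      rintro ⟨hpq, hall⟩
      refine hb ⟨fun j => ?_, (hall 0).1⟩
      have hj := (third_spec p q (s j) hpq).mp (hall j)
      have h0 := (third_spec p q (s 0) hpq).mp (hall 0)
      rw [hj, h0]

lemma degree_snoc {n : ℕ} (s : V (n+1)) (p : Fin 3) :
    (hanoi (n+2)).degree (Fin.snoc s p)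
      = (hanoi (n+1)).degree s + (if (∀ j, s j = s 0) ∧ s 0 ≠ p then 1 else 0) := by
  classical
  unfold SimpleGraph.degree
  rw [Finset.card_eq_sum_ones, Finset.card_eq_sum_ones]
  have := sum_nbhd_snoc (M := ℕ) s p (fun _ => 1)
  simpa using this

end HanoiAux
namespace HanoiAux

noncomputable def ind (n : ℕ) (s : V n) : ℝ :=
  (if s = corner n 0 then 1 else 0) - (if s = corner n 2 then 1 else 0)

structure Inv (n : ℕ) : Prop where
  c0 : phi n (corner n 0) = rr n
  c1 : phi n (corner n 1) = rr n / 2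
  c2 : phi n (corner n 2) = 0
  lap : ∀ s : V n, ((hanoi n).degree s : ℝ) * phi n s
          - ∑ t ∈ (hanoi n).neighborFinset s, phi n t = ind n s
  tot : ∑ s : V n, ((hanoi n).degree s : ℝ) * phi n s = 3/2 * ((3:ℝ)^n - 1) * rr n
  degsum : ∑ s : V n, ((hanoi n).degree s : ℝ) = 3 * ((3:ℝ)^n - 1)

lemma sum_V1 {M : Type*} [AddCommMonoid M] (g : V 1 → M) :
    ∑ s : V 1, g s = ∑ c : Fin 3, g (fun _ => c) := by
  refine Fintype.sum_equiv (Equiv.funUnique (Fin 1) (Fin 3)) _ _ fun s => ?_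
  congr 1
  funext j
  rw [Subsingleton.elim j 0]
  rfl

lemma phi1 (c : Fin 3) :
    phi 1 (fun _ => c) = if c = 0 then 2/3 else if c = 1 then 1/3 else 0 := by
  have h0 : (fun (_ : Fin 1) => c) (Fin.last 0) = c := rfl
  simp only [phi, h0, rr]
  norm_num

lemma rr1 : rr 1 = 2/3 := by norm_num [rr]

lemma inv_one : Inv 1 := by
  have hc : ∀ c : Fin 3, corner 1 c = (fun _ => c) := fun c => rfl
  have hphi0 : phi 1 (fun _ => 0) = 2/3 := by rw [phi1]; norm_num
  have hphi1 : phi 1 (fun _ => 1) = 1/3 := by rw [phi1]; norm_num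
  have hphi2 : phi 1 (fun _ => 2) = 0 := by
    rw [phi1, if_neg (by decide), if_neg (by decide)]
  have hdeg : ∀ c : Fin 3, (hanoi 1).degree (fun _ => c) = 2 := by decide
  have hN0 : (hanoi 1).neighborFinset (fun _ => 0) = {fun _ => 1, fun _ => 2} := by decide
  have hN1 : (hanoi 1).neighborFinset (fun _ => 1) = {fun _ => 0, fun _ => 2} := by decide
  have hN2 : (hanoi 1).neighborFinset (fun _ => 2) = {fun _ => 0, fun _ => 1} := by decide
  have hne12 : (fun (_ : Fin 1) => (1:Fin 3)) ≠ (fun _ => 2) := by decide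
  have hne02 : (fun (_ : Fin 1) => (0:Fin 3)) ≠ (fun _ => 2) := by decide
  have hne01 : (fun (_ : Fin 1) => (0:Fin 3)) ≠ (fun _ => 1) := by decide
  refine ⟨?_, ?_, ?_, ?_, ?_, ?_⟩
  · rw [hc, hphi0, rr1]
  · rw [hc, hphi1, rr1]; norm_num
  · rw [hc, hphi2]
  · intro s
    have hs : s = (fun _ => s 0) := by
      funext j; rw [Subsingleton.elim j 0]
    rw [hs]
    have h3 : s 0 = 0 ∨ s 0 = 1 ∨ s 0 = 2 := by omega
    rcases h3 with h | h | h <;> rw [h]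
    · rw [hN0, Finset.sum_pair hne12, hdeg, hphi0, hphi1, hphi2]
      simp only [ind, hc]
      rw [if_neg hne02]
      norm_num
    · rw [hN1, Finset.sum_pair hne02, hdeg, hphi0, hphi1, hphi2]
      simp only [ind, hc]
      rw [if_neg hne01.symm, if_neg hne12]
      norm_num
    · rw [hN2, Finset.sum_pair hne01, hdeg, hphi0, hphi1, hphi2]
      simp only [ind, hc]
      rw [if_neg hne02.symm]
      norm_num
  · rw [sum_V1, Fin.sum_univ_three, hdeg, hdeg, hdeg, hphi0, hphi1, hphi2, rr1]
    norm_num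
  · rw [sum_V1, Fin.sum_univ_three, hdeg, hdeg, hdeg]
    norm_num

end HanoiAux
namespace HanoiAux

lemma corner_apply {n : ℕ} (c : Fin 3) (j : Fin n) : corner n c j = c := rfl

lemma corner_eq_corner {n : ℕ} {a b : Fin 3} :
    corner (n+1) a = corner (n+1) b ↔ a = b :=
  ⟨fun h => congrFun h 0, fun h => h ▸ rfl⟩

lemma swap_comp_corner (a b c : Fin 3) (n : ℕ) :
    (Equiv.swap a b : Equiv.Perm (Fin 3)) ∘ corner n c = corner n (Equiv.swap a b c) := rfl

lemma comp_eq_corner {n : ℕ} (π : Equiv.Perm (Fin 3)) (s : V n) (c : Fin 3) :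
    π ∘ s = corner n c ↔ s = corner n (π⁻¹ c) := by
  constructor
  · intro h
    funext j
    have := congrFun h j
    simp only [Function.comp_apply, corner_apply] at this ⊢
    rw [← this]
    simp [Equiv.Perm.inv_def]
  · rintro rfl
    funext j
    simp [corner_apply, Equiv.Perm.inv_def]

lemma ind_corner {n : ℕ} (c : Fin 3) :
    ind (n+1) (corner (n+1) c) = (if c = 0 then 1 else 0) - (if c = 2 then 1 else 0) := by
  simp only [ind, corner_eq_corner]

lemma ind_not_corner {n : ℕ} (s : V (n+1)) (h : ∀ c, s ≠ corner (n+1) c) :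
    ind (n+1) s = 0 := by
  simp [ind, h 0, h 2]

lemma lap_comp {m : ℕ} (I : Inv m) (π : Equiv.Perm (Fin 3)) (s : V m) :
    ((hanoi m).degree s : ℝ) * phi m (π ∘ s)
      - ∑ t ∈ (hanoi m).neighborFinset s, phi m (π ∘ t) = ind m (π ∘ s) := by
  have := I.lap (π ∘ s)
  rwa [degree_comp, sum_neighbors_comp] at this

lemma lap_affine {m : ℕ} (s : V m) (a b c : ℝ) (g g1 g2 : V m → ℝ) (i1 i2 : ℝ)
    (hg : ∀ t, g t = a * g1 t + b * g2 t + c)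
    (h1 : ((hanoi m).degree s : ℝ) * g1 s - ∑ t ∈ (hanoi m).neighborFinset s, g1 t = i1)
    (h2 : ((hanoi m).degree s : ℝ) * g2 s - ∑ t ∈ (hanoi m).neighborFinset s, g2 t = i2) :
    ((hanoi m).degree s : ℝ) * g s - ∑ t ∈ (hanoi m).neighborFinset s, g t
      = a * i1 + b * i2 := by
  simp only [hg]
  rw [Finset.sum_add_distrib, Finset.sum_add_distrib, ← Finset.mul_sum, ← Finset.mul_sum,
    Finset.sum_const, nsmul_eq_mul]
  have hc : ((hanoi m).neighborFinset s).card = (hanoi m).degree s := rfl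
  rw [hc]
  linear_combination a * h1 + b * h2

lemma tot_comp {m : ℕ} (I : Inv m) (π : Equiv.Perm (Fin 3)) :
    ∑ s : V m, ((hanoi m).degree s : ℝ) * phi m (π ∘ s) = 3/2 * ((3:ℝ)^m - 1) * rr m := by
  rw [← I.tot]
  refine Fintype.sum_equiv (compEquiv m π) _ _ fun s => ?_
  rw [compEquiv_apply, degree_comp]

end HanoiAux
namespace HanoiAux

lemma sw12_0 : Equiv.swap (1:Fin 3) 2 0 = 0 := by decide
lemma sw12_1 : Equiv.swap (1:Fin 3) 2 1 = 2 := by decide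
lemma sw12_2 : Equiv.swap (1:Fin 3) 2 2 = 1 := by decide
lemma sw02_0 : Equiv.swap (0:Fin 3) 2 0 = 2 := by decide
lemma sw02_1 : Equiv.swap (0:Fin 3) 2 1 = 1 := by decide
lemma sw02_2 : Equiv.swap (0:Fin 3) 2 2 = 0 := by decide
lemma sw01_0 : Equiv.swap (0:Fin 3) 1 0 = 1 := by decide
lemma sw01_1 : Equiv.swap (0:Fin 3) 1 1 = 0 := by decide
lemma sw01_2 : Equiv.swap (0:Fin 3) 1 2 = 2 := by decide

lemma lap_block0 {n : ℕ} (I : Inv (n+1)) (s : V (n+1)) :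
    ((hanoi (n+1)).degree s : ℝ) * phi (n+2) (Fin.snoc s 0)
      - ∑ t ∈ (hanoi (n+1)).neighborFinset s, phi (n+2) (Fin.snoc t 0)
      = 2/3 * ind (n+1) (Equiv.swap 1 2 ∘ s) + 1/3 * ind (n+1) s :=
  lap_affine s (2/3) (1/3) (2/3 * rr (n+1) + 2/3)
    (fun t => phi (n+2) (Fin.snoc t 0))
    (fun t => phi (n+1) ((Equiv.swap 1 2 : Equiv.Perm (Fin 3)) ∘ t))
    (fun t => phi (n+1) t) _ _
    (fun t => by simp only [phi_snoc0]; ring) (lap_comp I _ s) (I.lap s)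

lemma lap_block1 {n : ℕ} (I : Inv (n+1)) (s : V (n+1)) :
    ((hanoi (n+1)).degree s : ℝ) * phi (n+2) (Fin.snoc s 1)
      - ∑ t ∈ (hanoi (n+1)).neighborFinset s, phi (n+2) (Fin.snoc t 1)
      = 1/3 * ind (n+1) (Equiv.swap 0 2 ∘ s) + 0 * 0 :=
  lap_affine s (1/3) 0 (2/3 * rr (n+1) + 1/3)
    (fun t => phi (n+2) (Fin.snoc t 1))
    (fun t => phi (n+1) ((Equiv.swap 0 2 : Equiv.Perm (Fin 3)) ∘ t))
    (fun _ => (0:ℝ)) _ 0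
    (fun t => by simp only [phi_snoc1]; ring) (lap_comp I _ s) (by simp)

lemma lap_block2 {n : ℕ} (I : Inv (n+1)) (s : V (n+1)) :
    ((hanoi (n+1)).degree s : ℝ) * phi (n+2) (Fin.snoc s 2)
      - ∑ t ∈ (hanoi (n+1)).neighborFinset s, phi (n+2) (Fin.snoc t 2)
      = 1/3 * ind (n+1) s + 2/3 * ind (n+1) (Equiv.swap 0 1 ∘ s) :=
  lap_affine s (1/3) (2/3) 0
    (fun t => phi (n+2) (Fin.snoc t 2))
    (fun t => phi (n+1) t)
    (fun t => phi (n+1) ((Equiv.swap 0 1 : Equiv.Perm (Fin 3)) ∘ t)) _ _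
    (fun t => by simp only [phi_snoc2]; ring) (I.lap s) (lap_comp I _ s)

lemma fin3 (c : Fin 3) : c = 0 ∨ c = 1 ∨ c = 2 := by fin_cases c <;> decide

lemma ind_corner0 {n : ℕ} : ind (n+1) (corner (n+1) 0) = 1 := by
  rw [ind, if_pos rfl, if_neg (fun h => absurd (corner_eq_corner.mp h) (by decide))]
  norm_num

lemma ind_corner1 {n : ℕ} : ind (n+1) (corner (n+1) 1) = 0 := by
  rw [ind, if_neg (fun h => absurd (corner_eq_corner.mp h) (by decide)),
    if_neg (fun h => absurd (corner_eq_corner.mp h) (by decide))]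
  norm_num

lemma ind_corner2 {n : ℕ} : ind (n+1) (corner (n+1) 2) = -1 := by
  rw [ind, if_pos rfl, if_neg (fun h => absurd (corner_eq_corner.mp h) (by decide))]
  norm_num

lemma ind_snoc {n : ℕ} (s : V (n+1)) (p : Fin 3) :
    ind (n+2) (Fin.snoc s p) = (if s = corner (n+1) 0 ∧ p = 0 then 1 else 0)
      - (if s = corner (n+1) 2 ∧ p = 2 then 1 else 0) := by
  rw [ind, corner_snoc (n+1) 0, corner_snoc (n+1) 2]
  simp only [snoc_inj]

-- block corner values
lemma val01 {n : ℕ} (I : Inv (n+1)) :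
    phi (n+2) (Fin.snoc (corner (n+1) 1) 0) = 5/6 * rr (n+1) + 2/3 := by
  simp only [phi_snoc0, swap_comp_corner, sw12_1, I.c1, I.c2]; ring
lemma val02 {n : ℕ} (I : Inv (n+1)) :
    phi (n+2) (Fin.snoc (corner (n+1) 2) 0) = rr (n+1) + 2/3 := by
  simp only [phi_snoc0, swap_comp_corner, sw12_2, I.c1, I.c2]; ring
lemma val10 {n : ℕ} (I : Inv (n+1)) :
    phi (n+2) (Fin.snoc (corner (n+1) 0) 1) = 2/3 * rr (n+1) + 1/3 := by
  simp only [phi_snoc1, swap_comp_corner, sw02_0, I.c2]; ring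
lemma val12 {n : ℕ} (I : Inv (n+1)) :
    phi (n+2) (Fin.snoc (corner (n+1) 2) 1) = rr (n+1) + 1/3 := by
  simp only [phi_snoc1, swap_comp_corner, sw02_2, I.c0]; ring
lemma val20 {n : ℕ} (I : Inv (n+1)) :
    phi (n+2) (Fin.snoc (corner (n+1) 0) 2) = 2/3 * rr (n+1) := by
  simp only [phi_snoc2, swap_comp_corner, sw01_0, I.c0, I.c1]; ring
lemma val21 {n : ℕ} (I : Inv (n+1)) :
    phi (n+2) (Fin.snoc (corner (n+1) 1) 2) = 5/6 * rr (n+1) := by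
  simp only [phi_snoc2, swap_comp_corner, sw01_1, I.c0, I.c1]; ring

lemma lap_step {n : ℕ} (I : Inv (n+1)) (v : V (n+2)) :
    ((hanoi (n+2)).degree v : ℝ) * phi (n+2) v
      - ∑ t ∈ (hanoi (n+2)).neighborFinset v, phi (n+2) t = ind (n+2) v := by
  obtain ⟨s, p, rfl⟩ : ∃ s p, v = Fin.snoc s p :=
    ⟨Fin.init v, v (Fin.last _), (Fin.snoc_init_self v).symm⟩
  rw [degree_snoc, sum_nbhd_snoc]
  push_cast
  by_cases hcor : ∀ j : Fin (n+1), s j = s 0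
  · obtain ⟨c, rfl⟩ : ∃ c, s = corner (n+1) c := ⟨s 0, funext fun j => hcor j⟩
    rcases eq_or_ne c p with rfl | hcp
    · rw [if_neg (fun h => h.2 rfl), if_neg (fun h => h.2 rfl), add_zero, add_zero]
      rcases fin3 c with rfl | rfl | rfl
      · rw [lap_block0 I, ← corner_snoc]
        simp only [swap_comp_corner, sw12_0, ind_corner0]
        norm_num
      · rw [lap_block1 I, ← corner_snoc]
        simp only [swap_comp_corner, sw02_1, ind_corner1]
        norm_num
      · rw [lap_block2 I, ← corner_snoc]
        simp only [swap_comp_corner, sw01_2, ind_corner2]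
        norm_num
    · have hpos : (∀ j : Fin (n+1), corner (n+1) c j = corner (n+1) c 0) ∧
          corner (n+1) c 0 ≠ p := ⟨fun j => rfl, hcp⟩
      rw [if_pos hpos, if_pos hpos]
      have hZ : ind (n+2) (Fin.snoc (corner (n+1) c) p) = 0 := by
        rw [ind_snoc,
          if_neg (fun h => hcp (((corner_eq_corner).mp h.1).trans h.2.symm)),
          if_neg (fun h => hcp (((corner_eq_corner).mp h.1).trans h.2.symm))]
        norm_num
      rw [hZ]
      rcases fin3 p with rfl | rfl | rfl <;> rcases fin3 c with rfl | rfl | rfl <;>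
        first | (exact absurd rfl hcp) | skip
      · -- p = 0, c = 1
        have key := lap_block0 I (corner (n+1) 1)
        simp only [swap_comp_corner, sw12_1, ind_corner1, ind_corner2] at key
        have h3 : third 0 (corner (n+1) 1 0) = 2 := by show third 0 1 = 2; decide
        rw [h3]
        linear_combination key + val01 I - val21 I
      · -- p = 0, c = 2
        have key := lap_block0 I (corner (n+1) 2)
        simp only [swap_comp_corner, sw12_2, ind_corner1, ind_corner2] at key
        have h3 : third 0 (corner (n+1) 2 0) = 1 := by show third 0 2 = 1; decide
        rw [h3]
        linear_combination key + val02 I - val12 I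
      · -- p = 1, c = 0
        have key := lap_block1 I (corner (n+1) 0)
        simp only [swap_comp_corner, sw02_0, ind_corner2] at key
        have h3 : third 1 (corner (n+1) 0 0) = 2 := by show third 1 0 = 2; decide
        rw [h3]
        linear_combination key + val10 I - val20 I
      · -- p = 1, c = 2
        have key := lap_block1 I (corner (n+1) 2)
        simp only [swap_comp_corner, sw02_2, ind_corner0] at key
        have h3 : third 1 (corner (n+1) 2 0) = 0 := by show third 1 2 = 0; decide
        rw [h3]
        linear_combination key + val12 I - val02 I
      · -- p = 2, c = 0
        have key := lap_block2 I (corner (n+1) 0)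
        simp only [swap_comp_corner, sw01_0, ind_corner0, ind_corner1] at key
        have h3 : third 2 (corner (n+1) 0 0) = 1 := by show third 2 0 = 1; decide
        rw [h3]
        linear_combination key + val20 I - val10 I
      · -- p = 2, c = 1
        have key := lap_block2 I (corner (n+1) 1)
        simp only [swap_comp_corner, sw01_1, ind_corner0, ind_corner1] at key
        have h3 : third 2 (corner (n+1) 1 0) = 0 := by show third 2 1 = 0; decide
        rw [h3]
        linear_combination key + val21 I - val01 I
  · rw [if_neg (fun h => hcor h.1), if_neg (fun h => hcor h.1), add_zero, add_zero]
    have hnc : ∀ c, s ≠ corner (n+1) c := fun c hc => hcor (fun j => by rw [hc]; rfl)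
    have hnc2 : ∀ (π : Equiv.Perm (Fin 3)), ind (n+1) (π ∘ s) = 0 := fun π =>
      ind_not_corner _ (fun c hc => hnc _ ((comp_eq_corner π s c).mp hc))
    have hZ : ind (n+2) (Fin.snoc s p) = 0 := by
      rw [ind_snoc, if_neg (fun h => hnc _ h.1), if_neg (fun h => hnc _ h.1)]
      norm_num
    rw [hZ]
    rcases fin3 p with rfl | rfl | rfl
    · rw [lap_block0 I, hnc2, ind_not_corner s hnc]; norm_num
    · rw [lap_block1 I, hnc2]; norm_num
    · rw [lap_block2 I, hnc2, ind_not_corner s hnc]; norm_num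

end HanoiAux
namespace HanoiAux

lemma sum_bridge {n : ℕ} (g : V (n+1) → Fin 3 → ℝ) :
    ∑ s : V (n+1), ∑ p : Fin 3, (if (∀ j, s j = s 0) ∧ s 0 ≠ p then g s p else 0)
      = ∑ c : Fin 3, ∑ p : Fin 3, (if c ≠ p then g (corner (n+1) c) p else 0) := by
  have point : ∀ s : V (n+1), (∑ p : Fin 3, if (∀ j, s j = s 0) ∧ s 0 ≠ p then g s p else 0)
      = ∑ c : Fin 3, (if s = corner (n+1) c
          then (∑ p : Fin 3, if c ≠ p then g (corner (n+1) c) p else 0) else 0) := by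
    intro s
    by_cases hcor : ∀ j, s j = s 0
    · obtain ⟨c, rfl⟩ : ∃ c, s = corner (n+1) c := ⟨s 0, funext fun j => hcor j⟩
      rw [Finset.sum_eq_single_of_mem c (Finset.mem_univ c)
        (fun c' _ hc' => if_neg (fun h => hc' ((corner_eq_corner.mp h).symm))), if_pos rfl]
      refine Finset.sum_congr rfl fun p _ => ?_
      exact if_congr ⟨fun h => h.2, fun hp => ⟨fun _ => rfl, hp⟩⟩ rfl rfl
    · rw [Finset.sum_eq_zero fun p _ => if_neg (fun h => hcor h.1),
        Finset.sum_eq_zero fun c _ => if_neg (fun h => hcor (fun j => by rw [h]; rfl))]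
  rw [Finset.sum_congr rfl fun s _ => point s, Finset.sum_comm]
  refine Finset.sum_congr rfl fun c _ => ?_
  rw [Finset.sum_ite_eq' Finset.univ (corner (n+1) c)
    (fun _ => ∑ p : Fin 3, if c ≠ p then g (corner (n+1) c) p else 0)]
  simp

lemma tot_affine {m : ℕ} (a b c S1 S2 : ℝ) (g g1 g2 : V m → ℝ)
    (hg : ∀ t, g t = a * g1 t + b * g2 t + c)
    (h1 : ∑ s : V m, ((hanoi m).degree s : ℝ) * g1 s = S1)
    (h2 : ∑ s : V m, ((hanoi m).degree s : ℝ) * g2 s = S2) :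
    ∑ s : V m, ((hanoi m).degree s : ℝ) * g s
      = a * S1 + b * S2 + c * ∑ s : V m, ((hanoi m).degree s : ℝ) := by
  have expand : ∀ s : V m, ((hanoi m).degree s : ℝ) * g s
      = a * (((hanoi m).degree s : ℝ) * g1 s) + b * (((hanoi m).degree s : ℝ) * g2 s)
        + c * ((hanoi m).degree s : ℝ) := fun s => by rw [hg s]; ring
  rw [Finset.sum_congr rfl fun s _ => expand s, Finset.sum_add_distrib,
    Finset.sum_add_distrib, ← Finset.mul_sum, ← Finset.mul_sum, ← Finset.mul_sum, h1, h2]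

end HanoiAux
namespace HanoiAux

lemma inv_step {n : ℕ} (I : Inv (n+1)) : Inv (n+2) := by
  have hr := rr_succ (n+1)
  refine ⟨?_, ?_, ?_, lap_step I, ?_, ?_⟩
  · rw [corner_snoc]
    simp only [phi_snoc0, swap_comp_corner, sw12_0, I.c0]
    rw [hr]; ring
  · rw [corner_snoc]
    simp only [phi_snoc1, swap_comp_corner, sw02_1, I.c1]
    rw [hr]; ring
  · rw [corner_snoc]
    simp only [phi_snoc2, swap_comp_corner, sw01_2, I.c2]
    ring
  · -- tot
    rw [sum_snoc (fun v => ((hanoi (n+2)).degree v : ℝ) * phi (n+2) v)]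
    have expand : ∀ (s : V (n+1)) (p : Fin 3),
        ((hanoi (n+2)).degree (Fin.snoc s p) : ℝ) * phi (n+2) (Fin.snoc s p)
        = ((hanoi (n+1)).degree s : ℝ) * phi (n+2) (Fin.snoc s p)
          + (if (∀ j, s j = s 0) ∧ s 0 ≠ p then phi (n+2) (Fin.snoc s p) else 0) := by
      intro s p
      rw [degree_snoc]
      by_cases hb : (∀ j, s j = s 0) ∧ s 0 ≠ p
      · rw [if_pos hb, if_pos hb]; push_cast; ring
      · rw [if_neg hb, if_neg hb]; push_cast; ring
    rw [Finset.sum_congr rfl fun s _ => Finset.sum_congr rfl fun p _ => expand s p]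
    rw [Finset.sum_congr rfl fun s _ => Finset.sum_add_distrib, Finset.sum_add_distrib,
      sum_bridge (fun s p => phi (n+2) (Fin.snoc s p))]
    have swapped : ∑ s : V (n+1), ∑ p : Fin 3,
        ((hanoi (n+1)).degree s : ℝ) * phi (n+2) (Fin.snoc s p)
        = ∑ p : Fin 3, ∑ s : V (n+1),
            ((hanoi (n+1)).degree s : ℝ) * phi (n+2) (Fin.snoc s p) := Finset.sum_comm
    rw [swapped, Fin.sum_univ_three]
    have t0 : ∑ s : V (n+1), ((hanoi (n+1)).degree s : ℝ) * phi (n+2) (Fin.snoc s 0)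
        = (2/3) * (3/2 * ((3:ℝ)^(n+1) - 1) * rr (n+1))
          + (1/3) * (3/2 * ((3:ℝ)^(n+1) - 1) * rr (n+1))
          + (2/3 * rr (n+1) + 2/3) * (3 * ((3:ℝ)^(n+1) - 1)) := by
      rw [tot_affine (2/3) (1/3) (2/3 * rr (n+1) + 2/3) _ _
        (fun t => phi (n+2) (Fin.snoc t 0))
        (fun t => phi (n+1) ((Equiv.swap 1 2 : Equiv.Perm (Fin 3)) ∘ t))
        (fun t => phi (n+1) t)
        (fun t => by simp only [phi_snoc0]; ring) (tot_comp I _) I.tot, I.degsum]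
    have t1 : ∑ s : V (n+1), ((hanoi (n+1)).degree s : ℝ) * phi (n+2) (Fin.snoc s 1)
        = (1/3) * (3/2 * ((3:ℝ)^(n+1) - 1) * rr (n+1)) + 0 * 0
          + (2/3 * rr (n+1) + 1/3) * (3 * ((3:ℝ)^(n+1) - 1)) := by
      rw [tot_affine (1/3) 0 (2/3 * rr (n+1) + 1/3) _ 0
        (fun t => phi (n+2) (Fin.snoc t 1))
        (fun t => phi (n+1) ((Equiv.swap 0 2 : Equiv.Perm (Fin 3)) ∘ t))
        (fun _ => (0:ℝ))
        (fun t => by simp only [phi_snoc1]; ring) (tot_comp I _) (by simp), I.degsum]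
    have t2 : ∑ s : V (n+1), ((hanoi (n+1)).degree s : ℝ) * phi (n+2) (Fin.snoc s 2)
        = (1/3) * (3/2 * ((3:ℝ)^(n+1) - 1) * rr (n+1))
          + (2/3) * (3/2 * ((3:ℝ)^(n+1) - 1) * rr (n+1))
          + 0 * ∑ s : V (n+1), ((hanoi (n+1)).degree s : ℝ) := by
      rw [tot_affine (1/3) (2/3) 0 _ _
        (fun t => phi (n+2) (Fin.snoc t 2))
        (fun t => phi (n+1) t)
        (fun t => phi (n+1) ((Equiv.swap 0 1 : Equiv.Perm (Fin 3)) ∘ t))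
        (fun t => by simp only [phi_snoc2]; ring) I.tot (tot_comp I _)]
    rw [t0, t1, t2]
    have bridgeval : ∑ c : Fin 3, ∑ p : Fin 3,
        (if c ≠ p then phi (n+2) (Fin.snoc (corner (n+1) c) p) else 0)
        = 5 * rr (n+1) + 2 := by
      rw [Fin.sum_univ_three]
      rw [Fin.sum_univ_three, Fin.sum_univ_three, Fin.sum_univ_three]
      rw [if_neg (by decide), if_pos (by decide), if_pos (by decide),
        if_pos (by decide), if_neg (by decide), if_pos (by decide),
        if_pos (by decide), if_pos (by decide), if_neg (by decide)]
      rw [val01 I, val02 I, val10 I, val12 I, val20 I, val21 I]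
      ring
    rw [bridgeval, show rr (n+2) = (5 * rr (n+1) + 2)/3 from rr_succ (n+1),
      show ((3:ℝ))^(n+2) = 3 * 3^(n+1) from by ring]
    ring
  · -- degsum
    rw [sum_snoc (fun v => ((hanoi (n+2)).degree v : ℝ))]
    have expand : ∀ (s : V (n+1)) (p : Fin 3),
        ((hanoi (n+2)).degree (Fin.snoc s p) : ℝ)
        = ((hanoi (n+1)).degree s : ℝ)
          + (if (∀ j, s j = s 0) ∧ s 0 ≠ p then (1:ℝ) else 0) := by
      intro s p
      rw [degree_snoc]
      by_cases hb : (∀ j, s j = s 0) ∧ s 0 ≠ p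
      · rw [if_pos hb, if_pos hb]; push_cast; ring
      · rw [if_neg hb, if_neg hb]; push_cast; ring
    rw [Finset.sum_congr rfl fun s _ => Finset.sum_congr rfl fun p _ => expand s p]
    rw [Finset.sum_congr rfl fun s _ => Finset.sum_add_distrib, Finset.sum_add_distrib,
      sum_bridge (fun _ _ => (1:ℝ))]
    simp only [Finset.sum_const, Finset.card_univ, Fintype.card_fin, nsmul_eq_mul]
    rw [← Finset.mul_sum, I.degsum]
    rw [Fin.sum_univ_three]
    rw [Fin.sum_univ_three, Fin.sum_univ_three, Fin.sum_univ_three]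
    rw [if_neg (by decide), if_pos (by decide), if_pos (by decide),
      if_pos (by decide), if_neg (by decide), if_pos (by decide),
      if_pos (by decide), if_pos (by decide), if_neg (by decide)]
    rw [show ((3:ℝ))^(n+2) = 3 * 3^(n+1) from by ring]
    push_cast
    ring

lemma inv_all : ∀ n : ℕ, 1 ≤ n → Inv n := by
  intro n hn
  induction n with
  | zero => omega
  | succ m ih =>
    rcases Nat.eq_or_lt_of_le hn with h | h
    · rw [← h] at *
      exact inv_one
    · have hm : 1 ≤ m := by omega
      obtain ⟨k, rfl⟩ : ∃ k, m = k + 1 := ⟨m - 1, by omega⟩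
      exact inv_step (ih hm)

end HanoiAux
namespace HanoiAux

lemma deg_pos {m : ℕ} (s : V (m+1)) : 0 < (hanoi (m+1)).degree s := by
  rw [SimpleGraph.degree_pos_iff_exists_adj]
  refine ⟨Function.update s 0 (s 0 + 1), 0, fun j hj => (Function.update_of_ne hj _ s).symm,
    ?_, fun j hj => absurd (Fin.lt_def.mp hj) (by simp)⟩
  rw [Function.update_self]
  revert s
  intro s
  have : ∀ a : Fin 3, a ≠ a + 1 := by decide
  exact this (s 0)

lemma sum_sum_swap {m : ℕ} (F : V m → V m → ℝ) :
    ∑ s : V m, ∑ t ∈ (hanoi m).neighborFinset s, F s t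
      = ∑ s : V m, ∑ t ∈ (hanoi m).neighborFinset s, F t s := by
  have e1 : ∀ (G : V m → V m → ℝ), ∑ s : V m, ∑ t ∈ (hanoi m).neighborFinset s, G s t
      = ∑ s : V m, ∑ t : V m, if (hanoi m).Adj s t then G s t else 0 := fun G =>
    Finset.sum_congr rfl fun s _ => sum_nbhd s (G s)
  rw [e1, e1, Finset.sum_comm]
  refine Finset.sum_congr rfl fun s _ => Finset.sum_congr rfl fun t _ => ?_
  congr 1
  exact propext (SimpleGraph.adj_comm _ _ _)

end HanoiAux


open HanoiAux in
/-- the expected hitting time of corner `C` from corner `A` in `H_n`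
equals `(3^n − 1)·(5^n − 3^n)/(2·3^(n−1))`. -/
theorem hanoi_hitting_time_one_to_three (n : ℕ) (hn : 1 ≤ n)
    (h : (Fin n → Fin 3) → ℝ)
    (hC : h (corner n 2) = 0)
    (hrec : ∀ s, s ≠ corner n 2 →
      h s = 1 + (1 / ((hanoi n).degree s : ℝ)) * ∑ t ∈ (hanoi n).neighborFinset s, h t) :
    h (corner n 0) = ((3 : ℝ) ^ n - 1) * ((5 : ℝ) ^ n - 3 ^ n) / (2 * 3 ^ (n - 1)) := by
  obtain ⟨m, rfl⟩ : ∃ m, n = m + 1 := ⟨n - 1, by omega⟩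
  have I : HanoiAux.Inv (m+1) := inv_all (m+1) (by omega)
  have hdegpos : ∀ s : V (m+1), ((hanoi (m+1)).degree s : ℝ) ≠ 0 := fun s => by
    have := deg_pos s
    positivity
  -- rearranged harmonicity
  have hrec' : ∀ s : V (m+1), s ≠ corner (m+1) 2 →
      ((hanoi (m+1)).degree s : ℝ) * h s - ∑ t ∈ (hanoi (m+1)).neighborFinset s, h t
        = ((hanoi (m+1)).degree s : ℝ) := by
    intro s hs
    have hd := hdegpos s
    rw [hrec s hs]
    field_simp
    ring
  -- key sum evaluated two ways
  have E1 : ∑ s : V (m+1), phi (m+1) s *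
      (((hanoi (m+1)).degree s : ℝ) * h s - ∑ t ∈ (hanoi (m+1)).neighborFinset s, h t)
      = ∑ s : V (m+1), ((hanoi (m+1)).degree s : ℝ) * phi (m+1) s := by
    refine Finset.sum_congr rfl fun s _ => ?_
    by_cases hs : s = corner (m+1) 2
    · rw [hs, I.c2]; ring
    · rw [hrec' s hs]; ring
  have E2 : ∑ s : V (m+1), phi (m+1) s *
      (((hanoi (m+1)).degree s : ℝ) * h s - ∑ t ∈ (hanoi (m+1)).neighborFinset s, h t)
      = ∑ s : V (m+1), ind (m+1) s * h s := by
    have expand1 : ∀ s : V (m+1), phi (m+1) s *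
        (((hanoi (m+1)).degree s : ℝ) * h s - ∑ t ∈ (hanoi (m+1)).neighborFinset s, h t)
        = ((hanoi (m+1)).degree s : ℝ) * phi (m+1) s * h s
          - ∑ t ∈ (hanoi (m+1)).neighborFinset s, phi (m+1) s * h t := by
      intro s
      rw [← Finset.mul_sum]
      ring
    have expand2 : ∀ s : V (m+1), ind (m+1) s * h s
        = ((hanoi (m+1)).degree s : ℝ) * phi (m+1) s * h s
          - ∑ t ∈ (hanoi (m+1)).neighborFinset s, phi (m+1) t * h s := by
      intro s
      rw [← Finset.sum_mul, ← I.lap s]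
      ring
    rw [Finset.sum_congr rfl fun s _ => expand1 s, Finset.sum_congr rfl fun s _ => expand2 s,
      Finset.sum_sub_distrib, Finset.sum_sub_distrib,
      sum_sum_swap (fun s t => phi (m+1) s * h t)]
  have E3 : ∑ s : V (m+1), ind (m+1) s * h s = h (corner (m+1) 0) := by
    have : ∀ s : V (m+1), ind (m+1) s * h s
        = (if s = corner (m+1) 0 then h s else 0) - (if s = corner (m+1) 2 then h s else 0) := by
      intro s
      rw [ind]
      split_ifs <;> ring
    rw [Finset.sum_congr rfl fun s _ => this s, Finset.sum_sub_distrib,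
      Finset.sum_ite_eq' Finset.univ (corner (m+1) 0) h,
      Finset.sum_ite_eq' Finset.univ (corner (m+1) 2) h,
      if_pos (Finset.mem_univ _), if_pos (Finset.mem_univ _), hC, sub_zero]
  have final : h (corner (m+1) 0) = 3/2 * ((3:ℝ)^(m+1) - 1) * rr (m+1) := by
    rw [← E3, ← E2, E1, I.tot]
  rw [final, rr]
  have h3 : (3:ℝ)^(m+1) = 3 * 3^m := by rw [pow_succ]; ring
  have hm3 : (3:ℝ)^m ≠ 0 := by positivity
  have hN1 : m + 1 - 1 = m := by omega
  rw [hN1, h3]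
  field_simp
end

section
/- Let n ≥ 1 and let h : (Fin n → Fin 3) → ℝ satisfy h = 0 on the corner set {A, B, C} and h(s) = 1 + (1/deg s)·Σ_{t adjacent to s} h(t) for every non-corner state s of the Hanoi graph H_n. Then h(s½) = (3/2)·(5^(n−1) − 3^(n−1)). (This is the expected number of random moves, starting with the largest disk on the second peg and all other disks on the first peg, until all disks are on one peg.) -/
/-! ### Pegs -/

def other (p q : Fin 3) : Fin 3 := ⟨2 * (p.1 + q.1) % 3, by omega⟩

lemma other_ne_left : ∀ p q : Fin 3, p ≠ q → other p q ≠ p := by decide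
lemma other_ne_right : ∀ p q : Fin 3, p ≠ q → other p q ≠ q := by decide
lemma eq_other : ∀ p q r : Fin 3, p ≠ q → r ≠ p → r ≠ q → r = other p q := by decide
lemma other_comm : ∀ p q : Fin 3, other p q = other q p := by decide
lemma peg_cases : ∀ a b : Fin 3, b ≠ a → b = a + 1 ∨ b = a + 2 := by decide
lemma add_one_ne : ∀ a : Fin 3, a + 1 ≠ a := by decide
lemma add_two_ne : ∀ a : Fin 3, a + 2 ≠ a := by decide
lemma add_one_ne_add_two : ∀ a : Fin 3, a + 1 ≠ a + 2 := by decide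
lemma eq_of_avoid : ∀ a b x y : Fin 3, x ≠ y → a ≠ x → a ≠ y → b ≠ x → b ≠ y → a = b := by decide

/-! ### Adjacency characterization -/

lemma fin_pos {n : ℕ} [NeZero n] (j : Fin n) (h : j ≠ 0) : (0:Fin n) < j := by
  rw [Fin.lt_def, Fin.val_zero]
  exact Nat.pos_of_ne_zero (fun hv => h (by ext; simpa using hv))

lemma adj_iff {n : ℕ} [NeZero n] (s t : Fin n → Fin 3) (j : Fin n)
    (hj : s j ≠ s 0) (hmin : ∀ i, i < j → s i = s 0) :
    (hanoi n).Adj s t ↔ t = Function.update s 0 (s 0 + 1) ∨ t = Function.update s 0 (s 0 + 2)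
      ∨ t = Function.update s j (other (s 0) (s j)) := by
  have hj0 : j ≠ 0 := fun h => hj (by rw [h])
  have hjpos : (0 : Fin n) < j := fin_pos j hj0
  constructor
  · rintro ⟨k, hEq, hNe, hLt⟩
    by_cases hk : k = 0
    · subst hk
      have ht : t = Function.update s 0 (t 0) := by
        funext i
        by_cases hi : i = 0
        · subst hi; simp
        · rw [Function.update_of_ne hi]; exact (hEq i hi).symm
      rcases peg_cases (s 0) (t 0) (Ne.symm hNe) with h | h
      · left; rw [ht, h]
      · right; left; rw [ht, h]
    · -- k ≠ 0
      have h0k : (0 : Fin n) < k := fin_pos k hk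
      have h0 := hLt 0 h0k
      have hall : ∀ i, i < k → s i = s 0 := fun i hi =>
        eq_of_avoid (s i) (s 0) (s k) (t k) hNe (hLt i hi).1 (hLt i hi).2 h0.1 h0.2
      have hjk : j = k := by
        rcases lt_trichotomy j k with h | h | h
        · exact absurd (hall j h) hj
        · exact h
        · exact absurd (hmin k h) (Ne.symm h0.1)
      subst hjk
      have htk : t j = other (s 0) (s j) :=
        eq_other (s 0) (s j) (t j) (Ne.symm hj) (fun hh => h0.2 hh.symm) (Ne.symm hNe)
      right; right
      funext i
      by_cases hi : i = j
      · subst hi; rw [Function.update_self]; exact htk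
      · rw [Function.update_of_ne hi]; exact (hEq i hi).symm
  · intro ht
    have hzlt : ∀ i : Fin n, ¬ (i < (0:Fin n)) := by
      intro i hi; rw [Fin.lt_def, Fin.val_zero] at hi; omega
    rcases ht with rfl | rfl | rfl
    · exact ⟨0, fun i hi => (Function.update_of_ne hi _ _).symm,
        by simp [Ne.symm (add_one_ne (s 0))], fun i hi => absurd hi (hzlt i)⟩
    · exact ⟨0, fun i hi => (Function.update_of_ne hi _ _).symm,
        by simp [Ne.symm (add_two_ne (s 0))], fun i hi => absurd hi (hzlt i)⟩
    · refine ⟨j, fun i hi => (Function.update_of_ne hi _ _).symm, ?_, fun i hi => ?_⟩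
      · simp only [Function.update_self]
        exact fun hh => other_ne_right (s 0) (s j) (Ne.symm hj) hh.symm
      · rw [Function.update_self, hmin i hi]
        exact ⟨Ne.symm hj, fun hh => other_ne_left (s 0) (s j) (Ne.symm hj) hh.symm⟩

/-! ### Neighbor finset -/

lemma sum_triple {α : Type*} [DecidableEq α] (f : α → ℝ) (a b c : α)
    (hab : a ≠ b) (hac : a ≠ c) (hbc : b ≠ c) :
    ∑ x ∈ ({a, b, c} : Finset α), f x = f a + f b + f c := by
  rw [Finset.sum_insert (by simp [hab, hac]), Finset.sum_insert (by simp [hbc]),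
    Finset.sum_singleton, add_assoc]

lemma neighborFinset_eq {n : ℕ} [NeZero n] (s : Fin n → Fin 3) (j : Fin n)
    (hj : s j ≠ s 0) (hmin : ∀ i, i < j → s i = s 0) :
    (hanoi n).neighborFinset s = {Function.update s 0 (s 0 + 1),
      Function.update s 0 (s 0 + 2), Function.update s j (other (s 0) (s j))} := by
  ext t
  rw [SimpleGraph.mem_neighborFinset, adj_iff s t j hj hmin]
  simp [Finset.mem_insert]

lemma nbr_distinct {n : ℕ} [NeZero n] (s : Fin n → Fin 3) (j : Fin n)
    (hj : s j ≠ s 0) :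
    Function.update s 0 (s 0 + 1) ≠ Function.update s 0 (s 0 + 2) ∧
    Function.update s 0 (s 0 + 1) ≠ Function.update s j (other (s 0) (s j)) ∧
    Function.update s 0 (s 0 + 2) ≠ Function.update s j (other (s 0) (s j)) := by
  have hj0 : j ≠ 0 := fun h => hj (by rw [h])
  refine ⟨fun h => add_one_ne_add_two (s 0) ?_, fun h => add_one_ne (s 0) ?_,
    fun h => add_two_ne (s 0) ?_⟩
  · have := congrFun h 0; simpa using this
  · have := congrFun h 0
    rwa [Function.update_self, Function.update_of_ne (Ne.symm hj0)] at this
  · have := congrFun h 0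
    rwa [Function.update_self, Function.update_of_ne (Ne.symm hj0)] at this

lemma degree_eq_three {n : ℕ} [NeZero n] (s : Fin n → Fin 3) (j : Fin n)
    (hj : s j ≠ s 0) (hmin : ∀ i, i < j → s i = s 0) :
    (hanoi n).degree s = 3 := by
  obtain ⟨h1, h2, h3⟩ := nbr_distinct s j hj
  rw [← SimpleGraph.card_neighborFinset_eq_degree, neighborFinset_eq s j hj hmin]
  rw [Finset.card_insert_of_notMem (by simp [h1, h2]),
    Finset.card_insert_of_notMem (by simp [h3]), Finset.card_singleton]

lemma sum_nbr {n : ℕ} [NeZero n] (s : Fin n → Fin 3) (j : Fin n)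
    (hj : s j ≠ s 0) (hmin : ∀ i, i < j → s i = s 0) (F : (Fin n → Fin 3) → ℝ) :
    ∑ t ∈ (hanoi n).neighborFinset s, F t =
      F (Function.update s 0 (s 0 + 1)) + F (Function.update s 0 (s 0 + 2)) +
      F (Function.update s j (other (s 0) (s j))) := by
  obtain ⟨h1, h2, h3⟩ := nbr_distinct s j hj
  rw [neighborFinset_eq s j hj hmin, sum_triple F _ _ _ h1 h2 h3]

/-- Existence of the minimal moving index for a non-corner state. -/
lemma exists_min_index {n : ℕ} [NeZero n] (s : Fin n → Fin 3)
    (hs : ∀ p, s ≠ corner n p) :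
    ∃ j : Fin n, s j ≠ s 0 ∧ ∀ i, i < j → s i = s 0 := by
  have h : ∃ m : ℕ, ∃ hm : m < n, s ⟨m, hm⟩ ≠ s 0 := by
    by_contra hc
    push_neg at hc
    exact hs (s 0) (funext fun i => hc i.1 i.2)
  classical
  let m := Nat.find h
  obtain ⟨hm, hsm⟩ := Nat.find_spec h
  refine ⟨⟨m, hm⟩, hsm, fun i hi => ?_⟩
  by_contra hne
  have hlt : i.1 < m := by simpa [Fin.lt_def] using hi
  exact Nat.find_min h hlt ⟨i.2, by simpa using hne⟩

/-! ### Constants -/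

noncomputable def sg (n : ℕ) : ℝ := 2 * 3 ^ (n - 1) / (5 ^ n - 3 ^ n)
noncomputable def cc (n : ℕ) : ℝ := 1 / (5 + 3 * sg (n - 1))
noncomputable def aa (n : ℕ) : ℝ := cc n * (2 + 3 * sg (n - 1))
noncomputable def vv (n : ℕ) : ℝ := 3 / 2 * (5 ^ (n - 1) - 3 ^ (n - 1))
noncomputable def tt (n : ℕ) : ℝ := (3 ^ n - 3) / 2

noncomputable def ab : ℕ → ℝ × ℝ
  | 0 => (1, 0)
  | (k + 1) => (cc (k + 2) * (ab k).1 + 2 * cc (k + 2) * (ab k).2,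
      cc (k + 2) * (ab k).2 + 2 * cc (k + 2) * (ab k).1)

noncomputable def al (n : ℕ) : ℝ := (ab (n - 1)).1
noncomputable def be (n : ℕ) : ℝ := (ab (n - 1)).2

lemma pow_lt_pow53 (m : ℕ) : (3 : ℝ) ^ (m + 1) < 5 ^ (m + 1) :=
  pow_lt_pow_left₀ (by norm_num) (by norm_num) (Nat.succ_ne_zero m)

lemma sg_pos (m : ℕ) : 0 < sg (m + 1) := by
  have := pow_lt_pow53 m
  simp only [sg, Nat.add_sub_cancel]
  have h3 : (0:ℝ) < 3 ^ m := by positivity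
  apply div_pos (by positivity) (by linarith)

lemma denom_pos (m : ℕ) : 0 < 5 + 3 * sg (m + 1) := by
  have := sg_pos m; linarith

lemma denom_ne (m : ℕ) : 5 + 3 * sg (m + 1) ≠ 0 := (denom_pos m).ne'

lemma cc_eq (m : ℕ) : cc (m + 2) = 1 / (5 + 3 * sg (m + 1)) := by
  simp [cc, Nat.add_sub_cancel]

lemma aa_eq (m : ℕ) : aa (m + 2) = cc (m + 2) * (2 + 3 * sg (m + 1)) := by
  simp [aa, Nat.add_sub_cancel]

lemma sg_one : sg 1 = 1 := by norm_num [sg]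
lemma vv_one : vv 1 = 0 := by norm_num [vv]
lemma tt_one : tt 1 = 0 := by norm_num [tt]
lemma al_one : al 1 = 1 := by norm_num [al, ab]
lemma be_one : be 1 = 0 := by norm_num [be, ab]

lemma al_succ (m : ℕ) : al (m + 2) = cc (m + 2) * al (m + 1) + 2 * cc (m + 2) * be (m + 1) := by
  simp [al, be, Nat.add_sub_cancel, ab]

lemma be_succ (m : ℕ) : be (m + 2) = cc (m + 2) * be (m + 1) + 2 * cc (m + 2) * al (m + 1) := by
  simp [al, be, Nat.add_sub_cancel, ab]

lemma sgD_ne (m : ℕ) : (5:ℝ) ^ (m+1) - 3 ^ (m+1) ≠ 0 := by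
  have := pow_lt_pow53 m; linarith

lemma sg_eq (m : ℕ) : sg (m+1) = 2 * 3 ^ m / (5 ^ (m+1) - 3 ^ (m+1)) := by
  simp [sg, Nat.add_sub_cancel]

lemma sg_key (m : ℕ) : sg (m+2) * (5 + 3 * sg (m+1)) = 3 * sg (m+1) := by
  rw [sg_eq m, sg_eq (m+1)]
  have h1 := sgD_ne m
  have h2 := sgD_ne (m+1)
  field_simp
  ring

/-- σ recursion : `sg (m+2) = 3 c σ`. -/
lemma sg_rec (m : ℕ) : sg (m + 2) = 3 * cc (m + 2) * sg (m + 1) := by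
  rw [cc_eq]
  have hd := denom_ne m
  field_simp
  linear_combination sg_key m

lemma absum : ∀ m : ℕ, al (m + 1) + be (m + 1) = sg (m + 1) := by
  intro m
  induction m with
  | zero => rw [al_one, be_one, sg_one]; norm_num
  | succ k ih =>
      rw [al_succ, be_succ, sg_rec]
      linear_combination (3 * cc (k + 2)) * ih

lemma E1 (m : ℕ) : 2 * aa (m+2) + (1 - aa (m+2)) * sg (m+1) + 2 * cc (m+2) = 3 * aa (m+2) := by
  rw [aa_eq, cc_eq]
  have := denom_ne m
  field_simp
  ring

lemma E2 (m : ℕ) : cc (m+2) * sg (m+1) + 4 * cc (m+2) * (1 - sg (m+1)) + aa (m+2)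
    = 6 * cc (m+2) := by
  rw [aa_eq, cc_eq]
  have := denom_ne m
  field_simp
  ring

/-- γ recursion: `1 - sg (m+2) = a + (1-a)(1 - sg (m+1))`. -/
lemma Egamma (m : ℕ) : 1 - sg (m+2) = aa (m+2) + (1 - aa (m+2)) * (1 - sg (m+1)) := by
  have h := sg_rec m
  rw [aa_eq]
  have hc : cc (m+2) * (5 + 3 * sg (m+1)) = 1 := by
    rw [cc_eq]; field_simp [denom_ne m]
  linear_combination (-1 : ℝ) * h - sg (m+1) * hc

lemma Evs (m : ℕ) : vv (m+2) * sg (m+1) = 3 + 2 * tt (m+1) := by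
  simp only [vv, tt, Nat.add_sub_cancel, show m + 2 - 1 = m + 1 by omega]
  rw [sg_eq]
  have := sgD_ne m
  field_simp
  ring

lemma Ett (m : ℕ) : tt (m+2) = tt (m+1) + vv (m+2) * sg (m+1) := by
  rw [Evs]; simp only [tt]; ring

/-! ### snoc utilities -/

lemma castSucc_zero' {m : ℕ} [NeZero m] : Fin.castSucc (0 : Fin m) = (0 : Fin (m+1)) := by
  ext; simp

lemma corner_snoc (m : ℕ) (p : Fin 3) : corner (m+1) p = Fin.snoc (corner m p) p := by
  funext i
  refine Fin.lastCases ?_ (fun i => ?_) i <;> simp [corner]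

lemma snoc_zero {m : ℕ} [NeZero m] (s' : Fin m → Fin 3) (P : Fin 3) :
    (Fin.snoc s' P : Fin (m+1) → Fin 3) 0 = s' 0 := by
  have h := Fin.snoc_castSucc (α := fun _ => Fin 3) (x := P) (p := s') (i := 0)
  rwa [castSucc_zero'] at h

lemma update_snoc_zero {m : ℕ} [NeZero m] (s' : Fin m → Fin 3) (P v : Fin 3) :
    Function.update (Fin.snoc s' P : Fin (m+1) → Fin 3) 0 v
      = Fin.snoc (Function.update s' 0 v) P := by
  have h := Fin.snoc_update (α := fun _ => Fin 3) (p := s') (i := 0) (y := v) (x := P)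
  rw [castSucc_zero'] at h
  exact h.symm

/-- the u-state: all disks on `x` except the smallest, which is on `z`. -/
def ustate (m : ℕ) [NeZero m] (x z : Fin 3) : Fin m → Fin 3 :=
  Function.update (corner m x) 0 z

lemma ustate_one (x z : Fin 3) : ustate 1 x z = corner 1 z := by
  funext i
  have : i = 0 := Subsingleton.elim i 0
  subst this
  simp [ustate, corner]

lemma ustate_snoc (m : ℕ) [NeZero m] (x z : Fin 3) :
    ustate (m+1) x z = Fin.snoc (ustate m x z) x := by
  rw [ustate, ustate, corner_snoc, update_snoc_zero]

/-! ### The explicit solution -/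

noncomputable def Qf : (n : ℕ) → Fin 3 → (Fin n → Fin 3) → ℝ
  | 0, _, _ => 0
  | 1, p, s => if s 0 = p then 1 else 0
  | (m+2), p, s =>
      if s (Fin.last (m+1)) = p then
        aa (m+2) + (1 - aa (m+2)) * Qf (m+1) p (Fin.init s)
      else
        cc (m+2) * Qf (m+1) p (Fin.init s)
          + 2 * cc (m+2) * Qf (m+1) (other p (s (Fin.last (m+1)))) (Fin.init s)

noncomputable def Tf : (n : ℕ) → (Fin n → Fin 3) → ℝ
  | 0, _ => 0
  | (m+1), s => Tf m (Fin.init s) + vv (m+1) * (1 - Qf m (s (Fin.last m)) (Fin.init s))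

lemma Qf_snoc (m : ℕ) (p P : Fin 3) (s' : Fin (m+1) → Fin 3) :
    Qf (m+2) p (Fin.snoc s' P) =
      if P = p then aa (m+2) + (1 - aa (m+2)) * Qf (m+1) p s'
      else cc (m+2) * Qf (m+1) p s' + 2 * cc (m+2) * Qf (m+1) (other p P) s' := by
  simp [Qf, Fin.init_snoc, Fin.snoc_last]

lemma Tf_snoc (m : ℕ) (P : Fin 3) (s' : Fin m → Fin 3) :
    Tf (m+1) (Fin.snoc s' P) = Tf m s' + vv (m+1) * (1 - Qf m P s') := by
  simp [Tf, Fin.init_snoc, Fin.snoc_last]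

lemma Qf_corner : ∀ (m : ℕ) (p q : Fin 3),
    Qf (m+1) p (corner (m+1) q) = if q = p then 1 else 0 := by
  intro m
  induction m with
  | zero => intro p q; simp [Qf, corner]; congr
  | succ k ih =>
      intro p q
      rw [corner_snoc, Qf_snoc]
      by_cases h : q = p
      · rw [if_pos h, ih, if_pos h]; ring
      · have hpq : p ≠ q := fun hh => h hh.symm
        rw [if_neg h, ih, ih, if_neg h,
          if_neg (fun hh : q = other p q => other_ne_right p q hpq hh.symm)]
        ring

lemma Qf_ustate : ∀ (m : ℕ) (x z p : Fin 3), z ≠ x →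
    Qf (m+1) p (ustate (m+1) x z) =
      if p = x then 1 - sg (m+1) else if p = z then al (m+1) else be (m+1) := by
  intro m
  induction m with
  | zero =>
      intro x z p hzx
      rw [ustate_one, Qf_corner, sg_one, al_one, be_one]
      by_cases h1 : p = x
      · subst h1; rw [if_neg (fun hh : z = p => hzx hh), if_pos rfl]; norm_num
      · by_cases h2 : p = z
        · subst h2; simp [h1]
        · rw [if_neg (fun hh : z = p => h2 hh.symm), if_neg h1, if_neg h2]
  | succ k ih =>
      intro x z p hzx
      rw [ustate_snoc, Qf_snoc]
      by_cases h1 : p = x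
      · subst h1
        rw [if_pos rfl, ih p z p hzx, if_pos rfl, if_pos rfl]
        exact (Egamma k).symm
      · rw [if_neg (fun hh : x = p => h1 hh.symm), if_neg h1]
        have hpx : p ≠ x := h1
        have hw1 : other p x ≠ p := other_ne_left p x hpx
        have hw2 : other p x ≠ x := other_ne_right p x hpx
        by_cases h2 : p = z
        · rw [if_pos h2]
          rw [ih x z p hzx, if_neg h1, if_pos h2]
          rw [ih x z (other p x) hzx, if_neg hw2,
            if_neg (fun hh : other p x = z => hw1 (hh.trans h2.symm)), al_succ]
        · rw [if_neg h2]
          have hzw : z = other p x := eq_other p x z hpx (fun hh => h2 hh.symm) hzx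
          rw [ih x z p hzx, if_neg h1, if_neg h2]
          rw [ih x z (other p x) hzx, if_neg hw2, if_pos hzw.symm, be_succ]

/-! ### Neighbor sums of snoc states -/

lemma caseA_sum (m : ℕ) (s' : Fin (m+1) → Fin 3) (j' : Fin (m+1))
    (hj : s' j' ≠ s' 0) (hmin : ∀ i, i < j' → s' i = s' 0) (P : Fin 3)
    (F : (Fin (m+2) → Fin 3) → ℝ) :
    ∑ t ∈ (hanoi (m+2)).neighborFinset (Fin.snoc s' P), F t
      = F (Fin.snoc (Function.update s' 0 (s' 0 + 1)) P)
      + F (Fin.snoc (Function.update s' 0 (s' 0 + 2)) P)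
      + F (Fin.snoc (Function.update s' j' (other (s' 0) (s' j'))) P) := by
  set s : Fin (m+2) → Fin 3 := Fin.snoc s' P with hs
  have h0 : s 0 = s' 0 := snoc_zero s' P
  have hjj : s (Fin.castSucc j') = s' j' := Fin.snoc_castSucc (α := fun _ => Fin 3) (x := P) (p := s') (i := j')
  have hj2 : s (Fin.castSucc j') ≠ s 0 := by rw [h0, hjj]; exact hj
  have hmin2 : ∀ i, i < Fin.castSucc j' → s i = s 0 := by
    intro i hi
    have hine : i ≠ Fin.last (m+1) := by
      intro hh
      rw [hh] at hi
      exact absurd (lt_trans hi (Fin.castSucc_lt_last j')) (lt_irrefl _)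
    obtain ⟨i', rfl⟩ := Fin.exists_castSucc_eq.mpr hine
    rw [h0, hs, Fin.snoc_castSucc]
    exact hmin i' (by rwa [Fin.castSucc_lt_castSucc_iff] at hi)
  rw [sum_nbr s (Fin.castSucc j') hj2 hmin2 F]
  rw [h0, hjj]
  congr 2
  · rw [hs, update_snoc_zero]
  · rw [hs, update_snoc_zero]
  · rw [hs, ← Fin.snoc_update]

lemma caseB_sum (m : ℕ) (x P : Fin 3) (hxP : P ≠ x)
    (F : (Fin (m+2) → Fin 3) → ℝ) :
    ∑ t ∈ (hanoi (m+2)).neighborFinset (Fin.snoc (corner (m+1) x) P), F t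
      = F (Fin.snoc (ustate (m+1) x (x + 1)) P)
      + F (Fin.snoc (ustate (m+1) x (x + 2)) P)
      + F (Fin.snoc (corner (m+1) x) (other x P)) := by
  set s : Fin (m+2) → Fin 3 := Fin.snoc (corner (m+1) x) P with hs
  have h0 : s 0 = x := snoc_zero (corner (m+1) x) P
  have hlast : s (Fin.last (m+1)) = P := Fin.snoc_last _ _
  have hj2 : s (Fin.last (m+1)) ≠ s 0 := by rw [h0, hlast]; exact hxP
  have hmin2 : ∀ i, i < Fin.last (m+1) → s i = s 0 := by
    intro i hi
    obtain ⟨i', rfl⟩ := Fin.exists_castSucc_eq.mpr hi.ne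
    rw [h0, hs, Fin.snoc_castSucc]
    rfl
  rw [sum_nbr s (Fin.last (m+1)) hj2 hmin2 F, h0, hlast]
  congr 2
  · rw [hs, update_snoc_zero]; rfl
  · rw [hs, update_snoc_zero]; rfl
  · rw [hs, Fin.update_snoc_last]

/-- every one-disk state is a corner -/
lemma one_corner (s : Fin 1 → Fin 3) : s = corner 1 (s 0) := by
  funext i
  have : i = 0 := Subsingleton.elim i 0
  rw [this]; rfl

lemma snoc_noncorner {m : ℕ} (s' : Fin (m+1) → Fin 3) (P : Fin 3)
    (hs : ∀ q, (Fin.snoc s' P : Fin (m+2) → Fin 3) ≠ corner (m+2) q)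
    (x : Fin 3) (hx : s' = corner (m+1) x) : P ≠ x := by
  intro hh
  exact hs x (by rw [hx, hh, ← corner_snoc])

lemma eq_add_two : ∀ x w : Fin 3, w ≠ x → w ≠ x + 1 → w = x + 2 := by decide
lemma eq_add_one : ∀ x w : Fin 3, w ≠ x → w ≠ x + 2 → w = x + 1 := by decide

lemma Qf_harm_bridge (k : ℕ) (p x P : Fin 3) (hxP : P ≠ x) :
    Qf (k+2) p (Fin.snoc (ustate (k+1) x (x+1)) P)
      + Qf (k+2) p (Fin.snoc (ustate (k+1) x (x+2)) P)
      + Qf (k+2) p (Fin.snoc (corner (k+1) x) (other x P))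
    = 3 * Qf (k+2) p (Fin.snoc (corner (k+1) x) P) := by
  have hxP' : x ≠ P := fun h => hxP h.symm
  set y := other x P with hy
  have hyx : y ≠ x := other_ne_left x P hxP'
  have hyP : y ≠ P := other_ne_right x P hxP'
  have hoPy : other P y = x :=
    (eq_other P y x (fun h => hyP h.symm) hxP' (fun h => hyx h.symm)).symm
  have hoyP : other y P = x :=
    (eq_other y P x hyP (fun h => hyx h.symm) hxP').symm
  have hz : Qf (k+2) p (Fin.snoc (ustate (k+1) x (x+1)) P)
      + Qf (k+2) p (Fin.snoc (ustate (k+1) x (x+2)) P)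
      = Qf (k+2) p (Fin.snoc (ustate (k+1) x P) P)
      + Qf (k+2) p (Fin.snoc (ustate (k+1) x y) P) := by
    rcases peg_cases x P hxP with h | h
    · have h2 : y = x + 2 := eq_add_two x y hyx (h ▸ hyP)
      rw [← h, ← h2]
    · have h2 : y = x + 1 := eq_add_one x y hyx (h ▸ hyP)
      rw [← h, ← h2, add_comm (Qf (k+2) p (Fin.snoc (ustate (k+1) x y) P))]
  rw [hz]
  have u1 : ∀ q : Fin 3, Qf (k+1) q (ustate (k+1) x P) =
      if q = x then 1 - sg (k+1) else if q = P then al (k+1) else be (k+1) :=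
    fun q => Qf_ustate k x P q hxP
  have u2 : ∀ q : Fin 3, Qf (k+1) q (ustate (k+1) x y) =
      if q = x then 1 - sg (k+1) else if q = y then al (k+1) else be (k+1) :=
    fun q => Qf_ustate k x y q hyx
  have hxy : x ≠ y := fun h => hyx h.symm
  have hPy : P ≠ y := fun h => hyP h.symm
  have hoxy : other x y = P := (eq_other x y P hxy hxP (fun h => hPy h)).symm
  by_cases hpP : p = P
  · subst hpP
    simp only [Qf_snoc, u1, u2, Qf_corner, hoPy]
    simp [hyP, hxP, hxP', hyx, hxy, hPy]
    linear_combination E1 k + (1 - aa (k+2)) * absum k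
  · by_cases hpx : p = x
    · subst hpx
      simp only [Qf_snoc, u1, u2, Qf_corner, ← hy, hoxy]
      simp [hyP, hxP, hxP', hyx, hxy, hPy]
      linear_combination 2 * cc (k+2) * absum k
    · have hpy : p = y := eq_other x P p hxP' hpx hpP
      rw [hpy]
      simp only [Qf_snoc, u1, u2, Qf_corner, hoyP]
      simp [hyP, hxP, hxP', hyx, hxy, hPy]
      linear_combination E2 k + cc (k+2) * absum k

lemma Qf_harm : ∀ (m : ℕ) (p : Fin 3) (s : Fin (m+1) → Fin 3),
    (∀ q, s ≠ corner (m+1) q) →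
    ∑ t ∈ (hanoi (m+1)).neighborFinset s, Qf (m+1) p t = 3 * Qf (m+1) p s := by
  intro m
  induction m with
  | zero =>
      intro p s hs
      exact absurd (one_corner s) (hs (s 0))
  | succ k ih =>
      intro p s hs
      have hsnoc : s = Fin.snoc (Fin.init s) (s (Fin.last (k+1))) :=
        (Fin.snoc_init_self s).symm
      set s' := Fin.init s with hs'
      set P := s (Fin.last (k+1)) with hP
      rw [hsnoc] at hs ⊢
      by_cases hc : ∃ x, s' = corner (k+1) x
      · obtain ⟨x, hx⟩ := hc
        have hxP : P ≠ x := snoc_noncorner s' P hs x hx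
        rw [hx, caseB_sum k x P hxP]
        exact Qf_harm_bridge k p x P hxP
      · push_neg at hc
        obtain ⟨j', hj, hmin⟩ := exists_min_index s' hc
        rw [caseA_sum k s' j' hj hmin P]
        by_cases hPp : P = p
        · have H := ih p s' hc
          rw [sum_nbr s' j' hj hmin (Qf (k+1) p)] at H
          simp only [Qf_snoc, if_pos hPp]
          linear_combination (1 - aa (k+2)) * H
        · have H1 := ih p s' hc
          have H2 := ih (other p P) s' hc
          rw [sum_nbr s' j' hj hmin _] at H1
          rw [sum_nbr s' j' hj hmin _] at H2
          simp only [Qf_snoc, if_neg hPp]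
          linear_combination cc (k+2) * H1 + 2 * cc (k+2) * H2

/-! ### T lemmas -/

lemma Tf_corner : ∀ (n : ℕ) (p : Fin 3), Tf n (corner n p) = 0 := by
  intro n
  induction n with
  | zero => intro p; rfl
  | succ m ih =>
      intro p
      rw [corner_snoc, Tf_snoc, ih]
      cases m with
      | zero => rw [vv_one]; ring
      | succ k => rw [Qf_corner, if_pos rfl]; ring

lemma Tf_ustate : ∀ (m : ℕ) (x z : Fin 3), z ≠ x →
    Tf (m+1) (ustate (m+1) x z) = tt (m+1) := by
  intro m
  induction m with
  | zero =>
      intro x z hzx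
      rw [ustate_one, Tf_corner, tt_one]
  | succ k ih =>
      intro x z hzx
      rw [ustate_snoc, Tf_snoc, ih x z hzx, Qf_ustate k x z x hzx, if_pos rfl, Ett k]
      ring

lemma Tf_bridge_val (k : ℕ) (x P : Fin 3) (hxP : P ≠ x) :
    Tf (k+2) (Fin.snoc (corner (k+1) x) P) = vv (k+2) := by
  rw [Tf_snoc, Tf_corner, Qf_corner, if_neg (fun h : x = P => hxP h.symm)]
  ring

lemma Tf_harm : ∀ (m : ℕ) (s : Fin (m+1) → Fin 3),
    (∀ q, s ≠ corner (m+1) q) →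
    ∑ t ∈ (hanoi (m+1)).neighborFinset s, Tf (m+1) t = 3 * Tf (m+1) s - 3 := by
  intro m
  induction m with
  | zero =>
      intro s hs
      exact absurd (one_corner s) (hs (s 0))
  | succ k ih =>
      intro s hs
      have hsnoc : s = Fin.snoc (Fin.init s) (s (Fin.last (k+1))) :=
        (Fin.snoc_init_self s).symm
      set s' := Fin.init s with hs'
      set P := s (Fin.last (k+1)) with hP
      rw [hsnoc] at hs ⊢
      by_cases hc : ∃ x, s' = corner (k+1) x
      · obtain ⟨x, hx⟩ := hc
        have hxP : P ≠ x := snoc_noncorner s' P hs x hx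
        rw [hx, caseB_sum k x P hxP, Tf_bridge_val k x P hxP]
        have hxP' : x ≠ P := fun h => hxP h.symm
        have hyx : other x P ≠ x := other_ne_left x P hxP'
        rw [Tf_bridge_val k x (other x P) hyx]
        have e1 : Tf (k+2) (Fin.snoc (ustate (k+1) x (x+1)) P)
            = tt (k+1) + vv (k+2) * (1 - Qf (k+1) P (ustate (k+1) x (x+1))) := by
          rw [Tf_snoc, Tf_ustate k x (x+1) (add_one_ne x)]
        have e2 : Tf (k+2) (Fin.snoc (ustate (k+1) x (x+2)) P)
            = tt (k+1) + vv (k+2) * (1 - Qf (k+1) P (ustate (k+1) x (x+2))) := by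
          rw [Tf_snoc, Tf_ustate k x (x+2) (add_two_ne x)]
        rw [e1, e2]
        have hq : Qf (k+1) P (ustate (k+1) x (x+1)) + Qf (k+1) P (ustate (k+1) x (x+2))
            = sg (k+1) := by
          rw [Qf_ustate k x (x+1) P (add_one_ne x), Qf_ustate k x (x+2) P (add_two_ne x)]
          rcases peg_cases x P hxP with h | h
          · have h2 : P ≠ x + 2 := by rw [h]; exact add_one_ne_add_two x
            rw [if_neg hxP, if_pos h, if_neg hxP, if_neg h2, absum]
          · have h2 : P ≠ x + 1 := by
              rw [h]; exact fun hh => add_one_ne_add_two x hh.symm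
            rw [if_neg hxP, if_neg h2, if_neg hxP, if_pos h, add_comm, absum]
        linear_combination (-(vv (k+2))) * hq - Evs k
      · push_neg at hc
        obtain ⟨j', hj, hmin⟩ := exists_min_index s' hc
        rw [caseA_sum k s' j' hj hmin P]
        have H1 := ih s' hc
        have H2 := Qf_harm k P s' hc
        rw [sum_nbr s' j' hj hmin _] at H1
        rw [sum_nbr s' j' hj hmin _] at H2
        simp only [Tf_snoc]
        linear_combination H1 - vv (k+2) * H2

/-! ### Connectivity -/

lemma adj_lift (m : ℕ) (s' t' : Fin m → Fin 3) (P : Fin 3)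
    (h : (hanoi m).Adj s' t') :
    (hanoi (m+1)).Adj (Fin.snoc s' P) (Fin.snoc t' P) := by
  obtain ⟨k, h1, h2, h3⟩ := h
  refine ⟨Fin.castSucc k, ?_, ?_, ?_⟩
  · intro j hj
    by_cases hjl : j = Fin.last m
    · subst hjl; rw [Fin.snoc_last, Fin.snoc_last]
    · obtain ⟨j', rfl⟩ := Fin.exists_castSucc_eq.mpr hjl
      rw [Fin.snoc_castSucc, Fin.snoc_castSucc]
      exact h1 j' (fun hh => hj (by rw [hh]))
  · rw [Fin.snoc_castSucc, Fin.snoc_castSucc]; exact h2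
  · intro j hj
    have hjl : j ≠ Fin.last m := by
      intro hh
      rw [hh] at hj
      exact absurd (lt_trans hj (Fin.castSucc_lt_last k)) (lt_irrefl _)
    obtain ⟨j', rfl⟩ := Fin.exists_castSucc_eq.mpr hjl
    rw [Fin.snoc_castSucc, Fin.snoc_castSucc, Fin.snoc_castSucc]
    exact h3 j' (by rwa [Fin.castSucc_lt_castSucc_iff] at hj)

lemma reach_lift (m : ℕ) (s' t' : Fin m → Fin 3) (P : Fin 3)
    (h : (hanoi m).Reachable s' t') :
    (hanoi (m+1)).Reachable (Fin.snoc s' P) (Fin.snoc t' P) := by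
  obtain ⟨w⟩ := h
  induction w with
  | nil => exact SimpleGraph.Reachable.refl _
  | cons ha _ ihw =>
      exact SimpleGraph.Reachable.trans
        (SimpleGraph.Adj.reachable (adj_lift m _ _ P ha)) ihw

lemma bridge_adj (m : ℕ) (c : Fin m → Fin 3) (P Q : Fin 3) (hPQ : P ≠ Q)
    (hc : ∀ i, c i ≠ P ∧ c i ≠ Q) :
    (hanoi (m+1)).Adj (Fin.snoc c P) (Fin.snoc c Q) := by
  refine ⟨Fin.last m, ?_, ?_, ?_⟩
  · intro j hj
    obtain ⟨j', rfl⟩ := Fin.exists_castSucc_eq.mpr hj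
    rw [Fin.snoc_castSucc, Fin.snoc_castSucc]
  · rw [Fin.snoc_last, Fin.snoc_last]; exact hPQ
  · intro j hj
    obtain ⟨j', rfl⟩ := Fin.exists_castSucc_eq.mpr hj.ne
    rw [Fin.snoc_castSucc, Fin.snoc_last, Fin.snoc_last]
    exact hc j'

lemma reach_corner : ∀ (n : ℕ) (s : Fin n → Fin 3) (p : Fin 3),
    (hanoi n).Reachable s (corner n p) := by
  intro n
  induction n with
  | zero =>
      intro s p
      have : s = corner 0 p := funext fun i => i.elim0
      rw [this]
  | succ m ih =>
      intro s p
      have hsnoc : s = Fin.snoc (Fin.init s) (s (Fin.last m)) := (Fin.snoc_init_self s).symm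
      set s' := Fin.init s with hs'
      set P := s (Fin.last m) with hP
      rw [hsnoc]
      by_cases hPp : P = p
      · rw [hPp, corner_snoc]
        exact reach_lift m s' (corner m p) p (ih s' p)
      · have h1 : (hanoi (m+1)).Reachable (Fin.snoc s' P)
            (Fin.snoc (corner m (other P p)) P) :=
          reach_lift m s' _ P (ih s' (other P p))
        have h2 : (hanoi (m+1)).Adj (Fin.snoc (corner m (other P p)) P)
            (Fin.snoc (corner m (other P p)) p) :=
          bridge_adj m _ P p hPp (fun i =>
            ⟨other_ne_left P p hPp, other_ne_right P p hPp⟩)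
        have h3 : (hanoi (m+1)).Reachable (Fin.snoc (corner m (other P p)) p)
            (corner (m+1) p) := by
          rw [corner_snoc]
          exact reach_lift m _ _ p (ih (corner m (other P p)) p)
        exact (h1.trans h2.reachable).trans h3

/-! ### Uniqueness: maximum principle -/

lemma walk_max {n : ℕ} [NeZero n] (G : (Fin n → Fin 3) → ℝ) (M : ℝ)
    (hM : ∀ s, G s ≤ M)
    (hG0 : ∀ p, G (corner n p) = 0)
    (hGh : ∀ s, (∀ p, s ≠ corner n p) →
      ∑ t ∈ (hanoi n).neighborFinset s, G t = 3 * G s) :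
    ∀ (u c : Fin n → Fin 3) (w : (hanoi n).Walk u c), (∃ p, c = corner n p) →
      G u = M → M ≤ 0 := by
  intro u c w
  induction w with
  | nil =>
      rintro ⟨p, rfl⟩ hu
      rw [← hu, hG0]
  | @cons u v _ ha w ihw =>
      intro hcc hu
      by_cases hc : ∃ p, u = corner n p
      · obtain ⟨p, rfl⟩ := hc
        rw [← hu, hG0]
      · push_neg at hc
        apply ihw hcc
        by_contra hv
        have hvlt : G v < M := lt_of_le_of_ne (hM v) hv
        have hmem : v ∈ (hanoi n).neighborFinset u := by
          rw [SimpleGraph.mem_neighborFinset]; exact ha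
        have hsum : ∑ t ∈ (hanoi n).neighborFinset u, G t
            < ∑ t ∈ (hanoi n).neighborFinset u, M := by
          apply Finset.sum_lt_sum (fun i _ => hM i) ⟨v, hmem, hvlt⟩
        rw [Finset.sum_const, nsmul_eq_mul] at hsum
        obtain ⟨j, hj, hmin⟩ := exists_min_index u hc
        rw [hGh u hc] at hsum
        have hdeg : (hanoi n).degree u = 3 := degree_eq_three u j hj hmin
        rw [SimpleGraph.card_neighborFinset_eq_degree, hdeg] at hsum
        rw [hu] at hsum
        push_cast at hsum
        linarith

lemma G_le_zero {n : ℕ} [NeZero n] (G : (Fin n → Fin 3) → ℝ)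
    (hG0 : ∀ p, G (corner n p) = 0)
    (hGh : ∀ s, (∀ p, s ≠ corner n p) →
      ∑ t ∈ (hanoi n).neighborFinset s, G t = 3 * G s) :
    ∀ s, G s ≤ 0 := by
  classical
  obtain ⟨s₀, _, hmax⟩ := Finset.exists_max_image (Finset.univ : Finset (Fin n → Fin 3)) G
    ⟨corner n 0, Finset.mem_univ _⟩
  have hM : ∀ s, G s ≤ G s₀ := fun s => hmax s (Finset.mem_univ s)
  obtain ⟨w⟩ := reach_corner n s₀ 0
  have hle : G s₀ ≤ 0 := walk_max G (G s₀) hM hG0 hGh s₀ _ w ⟨0, rfl⟩ rfl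
  intro s
  exact le_trans (hM s) hle

lemma G_eq_zero {n : ℕ} [NeZero n] (G : (Fin n → Fin 3) → ℝ)
    (hG0 : ∀ p, G (corner n p) = 0)
    (hGh : ∀ s, (∀ p, s ≠ corner n p) →
      ∑ t ∈ (hanoi n).neighborFinset s, G t = 3 * G s) :
    ∀ s, G s = 0 := by
  intro s
  have h1 := G_le_zero G hG0 hGh s
  have h2 := G_le_zero (fun s => - G s) (fun p => by simp [hG0 p])
    (fun s hs => by simp only [Finset.sum_neg_distrib, hGh s hs]; ring) s
  simp only [neg_nonpos] at h2
  linarith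

/-! ### Final assembly -/

lemma halfState_one : halfState 1 = corner 1 1 := by
  funext i
  have : i = 0 := Subsingleton.elim i 0
  subst this
  simp [halfState, corner]

lemma halfState_succ (k : ℕ) : halfState (k+2) = Fin.snoc (corner (k+1) 0) 1 := by
  funext i
  by_cases hi : i = Fin.last (k+1)
  · subst hi
    rw [Fin.snoc_last]
    simp [halfState]
  · obtain ⟨i', rfl⟩ := Fin.exists_castSucc_eq.mpr hi
    rw [Fin.snoc_castSucc]
    have : (i'.castSucc : ℕ) < k + 2 - 1 := by simpa using i'.isLt
    simp [halfState, this, corner]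
    omega

/-- starting with the largest disk on the second peg and all other disks on
the first peg, the expected number of moves until all disks are on one peg equals
`(3/2)·(5^(n−1) − 3^(n−1))`. -/
theorem hanoi_half_to_any (n : ℕ) (hn : 1 ≤ n)
    (h : (Fin n → Fin 3) → ℝ)
    (hcorner : ∀ p : Fin 3, h (corner n p) = 0)
    (hrec : ∀ s, (∀ p : Fin 3, s ≠ corner n p) →
      h s = 1 + (1 / ((hanoi n).degree s : ℝ)) * ∑ t ∈ (hanoi n).neighborFinset s, h t) :
    h (halfState n) = (3 / 2 : ℝ) * ((5 : ℝ) ^ (n - 1) - 3 ^ (n - 1)) := by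
  haveI : NeZero n := ⟨by omega⟩
  obtain ⟨m, rfl⟩ : ∃ m, n = m + 1 := ⟨n - 1, by omega⟩
  have heq : ∀ s, h s = Tf (m+1) s := by
    intro s
    have hz : h s - Tf (m+1) s = 0 := G_eq_zero (fun s => h s - Tf (m+1) s)
      (fun p => by
        show h (corner (m+1) p) - Tf (m+1) (corner (m+1) p) = 0
        rw [hcorner p, Tf_corner]; ring)
      (fun s hs => by
        show (∑ t ∈ (hanoi (m+1)).neighborFinset s, (h t - Tf (m+1) t))
          = 3 * (h s - Tf (m+1) s)
        obtain ⟨j, hj, hmin⟩ := exists_min_index s hs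
        have hdeg : (hanoi (m+1)).degree s = 3 := degree_eq_three s j hj hmin
        have hh := hrec s hs
        rw [hdeg] at hh
        push_cast at hh
        have hT := Tf_harm m s hs
        rw [Finset.sum_sub_distrib, hT]
        linarith) s
    linarith [hz]
  rw [heq]
  cases m with
  | zero =>
      rw [halfState_one, Tf_corner]
      norm_num
  | succ k =>
      rw [halfState_succ k, Tf_snoc, Tf_corner, Qf_corner,
        if_neg (by decide : ¬ (0 : Fin 3) = 1)]
      simp only [vv, Nat.add_sub_cancel]
      ring
end

section
/- Let n ≥ 1 and let p : (Fin n → Fin 3) → ℝ satisfy p(C) = 1, p(A) = p(B) = 0, and p(s) = (1/deg s)·Σ_{t adjacent to s} p(t) for every non-corner state s of the Hanoi graph H_n. Then (1/2)·Σ_{t adjacent to A} p(t) = 3^(n−1)/(5^n − 3^n). (This is p₂(n), the probability that the random walk started at A, after at least one move, first returns to the corner set {A,B,C} at C.) -/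
lemma adj_one (s t : Fin 1 → Fin 3) : (hanoi 1).Adj s t ↔ s 0 ≠ t 0 := by
  constructor
  · rintro ⟨k, h1, h2, h3⟩
    exact Fin.fin_one_eq_zero k ▸ h2
  · intro h
    exact ⟨0, fun j hj => absurd (Fin.fin_one_eq_zero j) hj, h,
      fun j hj => absurd hj (by simp [Fin.fin_one_eq_zero j])⟩

lemma adj_succ (m : ℕ) (s t : Fin (m+1) → Fin 3) :
    (hanoi (m+1)).Adj s t ↔
    (s (Fin.last m) = t (Fin.last m) ∧ (hanoi m).Adj (Fin.init s) (Fin.init t)) ∨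
    (Fin.init s = Fin.init t ∧ s (Fin.last m) ≠ t (Fin.last m) ∧
      ∀ j : Fin m, Fin.init s j ≠ s (Fin.last m) ∧ Fin.init s j ≠ t (Fin.last m)) := by
  constructor
  · rintro ⟨k, h1, h2, h3⟩
    by_cases hk : k = Fin.last m
    · subst hk
      refine Or.inr ⟨funext fun j => h1 _ (Fin.castSucc_lt_last j).ne, h2, fun j => ?_⟩
      exact h3 _ (Fin.castSucc_lt_last j)
    · obtain ⟨k', rfl⟩ := Fin.exists_castSucc_eq.mpr hk
      refine Or.inl ⟨h1 _ (Fin.castSucc_lt_last k').ne', ⟨k', fun j hj => h1 _ (by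
        simpa using hj), h2, fun j hj => h3 _ (by simpa using hj)⟩⟩
  · rintro (⟨hl, k', h1, h2, h3⟩ | ⟨hi, hl, hcond⟩)
    · refine ⟨Fin.castSucc k', fun j hj => ?_, h2, fun j hj => ?_⟩
      · by_cases hjl : j = Fin.last m
        · exact hjl ▸ hl
        · obtain ⟨j', rfl⟩ := Fin.exists_castSucc_eq.mpr hjl
          exact h1 j' (by simpa using hj)
      · obtain ⟨j', rfl⟩ := Fin.exists_castSucc_eq.mpr (hj.trans (Fin.castSucc_lt_last k')).ne
        exact h3 j' (by simpa using hj)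
    · refine ⟨Fin.last m, fun j hj => ?_, hl, fun j hj => ?_⟩
      · obtain ⟨j', rfl⟩ := Fin.exists_castSucc_eq.mpr hj
        exact congrFun hi j'
      · obtain ⟨j', rfl⟩ := Fin.exists_castSucc_eq.mpr hj.ne
        exact hcond j'

lemma third_ne (i q : Fin 3) (h : i ≠ q) : -(i+q) ≠ i ∧ -(i+q) ≠ q := by
  revert i q; decide

lemma eq_third (i z x : Fin 3) (hiz : i ≠ z) (h1 : x ≠ i) (h2 : x ≠ z) : x = -(i+z) := by
  revert i z x; decide

lemma ne_iff_third (i q z : Fin 3) (h : i ≠ q) : (z ≠ i ∧ z ≠ q) ↔ z = -(i+q) := by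
  revert i q z; decide

lemma corner_succ (m : ℕ) (q : Fin 3) : corner (m+1) q = Fin.snoc (corner m q) q := by
  funext j
  rcases Fin.eq_castSucc_or_eq_last j with ⟨j', rfl⟩ | rfl <;> simp [corner]

lemma init_corner (m : ℕ) (q : Fin 3) : Fin.init (corner (m+1) q) = corner m q := rfl

lemma snoc_inj (m : ℕ) (i : Fin 3) : Function.Injective (fun b : Fin m → Fin 3 => Fin.snoc b i (α := fun _ => Fin 3)) := by
  intro a b h
  have := congrArg Fin.init h
  simpa using this

lemma nbhd_corner (m : ℕ) (hm : 1 ≤ m) (q : Fin 3) :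
    (hanoi (m+1)).neighborFinset (corner (m+1) q) =
      ((hanoi m).neighborFinset (corner m q)).image (fun b => Fin.snoc b q) := by
  ext t
  simp only [SimpleGraph.mem_neighborFinset, Finset.mem_image, adj_succ]
  constructor
  · rintro (⟨hl, hadj⟩ | ⟨hi, hl, hcond⟩)
    · refine ⟨Fin.init t, by rwa [init_corner] at hadj, ?_⟩
      have hl' : q = t (Fin.last m) := hl
      rw [hl']
      exact Fin.snoc_init_self t
    · exact absurd rfl (hcond ⟨0, hm⟩).1
  · rintro ⟨b, hb, rfl⟩
    exact Or.inl ⟨by simp [corner], by rwa [init_corner, Fin.init_snoc]⟩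

lemma nbhd_subcorner (m : ℕ) (hm : 1 ≤ m) (q i : Fin 3) (hiq : i ≠ q) :
    (hanoi (m+1)).neighborFinset (Fin.snoc (corner m q) i) =
      insert (Fin.snoc (corner m q) (-(i+q)))
        (((hanoi m).neighborFinset (corner m q)).image (fun b => Fin.snoc b i)) := by
  ext t
  simp only [SimpleGraph.mem_neighborFinset, Finset.mem_insert, Finset.mem_image, adj_succ,
    Fin.snoc_last, Fin.init_snoc]
  constructor
  · rintro (⟨hl, hadj⟩ | ⟨hi', hl, hcond⟩)
    · exact Or.inr ⟨Fin.init t, hadj, by rw [hl]; exact Fin.snoc_init_self t⟩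
    · have h2 : t (Fin.last m) ≠ q := fun h => (hcond ⟨0, hm⟩).2 (by simp [corner, h])
      have h3 : t (Fin.last m) = -(i+q) := (ne_iff_third i q _ hiq).mp ⟨Ne.symm hl, h2⟩
      refine Or.inl ?_
      rw [← h3, hi']
      exact (Fin.snoc_init_self t).symm
  · rintro (rfl | ⟨b, hb, rfl⟩)
    · refine Or.inr ⟨by simp, ?_, fun j => ?_⟩
      · simp only [Fin.snoc_last]
        exact (third_ne i q hiq).1.symm
      · simp only [Fin.snoc_last]
        exact ⟨Ne.symm hiq, Ne.symm (third_ne i q hiq).2⟩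
    · exact Or.inl ⟨by simp, by simpa using hb⟩

lemma nbhd_interior (m : ℕ) (s : Fin (m+1) → Fin 3)
    (hnc : ∀ q, Fin.init s ≠ corner m q) :
    (hanoi (m+1)).neighborFinset s =
      ((hanoi m).neighborFinset (Fin.init s)).image (fun b => Fin.snoc b (s (Fin.last m))) := by
  ext t
  simp only [SimpleGraph.mem_neighborFinset, Finset.mem_image, adj_succ]
  constructor
  · rintro (⟨hl, hadj⟩ | ⟨hi, hl, hcond⟩)
    · exact ⟨Fin.init t, hadj, by rw [hl]; exact Fin.snoc_init_self t⟩
    · exfalso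
      refine hnc (-(s (Fin.last m) + t (Fin.last m))) (funext fun j => ?_)
      exact eq_third _ _ _ hl (hcond j).1 (hcond j).2
  · rintro ⟨b, hb, rfl⟩
    exact Or.inl ⟨by simp, by rwa [Fin.init_snoc]⟩

lemma snoc_third_not_mem (m : ℕ) (q i : Fin 3) (hiq : i ≠ q) (F : Finset (Fin m → Fin 3)) :
    Fin.snoc (corner m q) (-(i+q)) ∉ F.image (fun b => Fin.snoc b i (α := fun _ => Fin 3)) := by
  intro h
  obtain ⟨b, -, hb⟩ := Finset.mem_image.mp h
  have := congrFun hb (Fin.last m)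
  simp only [Fin.snoc_last] at this
  exact (third_ne i q hiq).1 this.symm

noncomputable def W (n : ℕ) : ℝ := 2 * 3^(n-1) / (5^n - 3^n)

lemma Wden_pos {n : ℕ} (hn : 1 ≤ n) : (0:ℝ) < 5^n - 3^n := by
  have : (3:ℝ)^n < 5^n := by
    apply pow_lt_pow_left₀ (by norm_num) (by norm_num)
    omega
  linarith

lemma W_pos {n : ℕ} (hn : 1 ≤ n) : 0 < W n := by
  apply div_pos (by positivity) (Wden_pos hn)

lemma W_one : W 1 = 1 := by norm_num [W]

lemma W_rec {k : ℕ} (hk : 1 ≤ k) : W (k+1) = 3 * W k / (3 * W k + 5) := by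
  obtain ⟨j, rfl⟩ := Nat.exists_eq_add_of_le hk
  have h1 : (0:ℝ) < 5^(1+j) - 3^(1+j) := Wden_pos (by omega)
  have h2 : (0:ℝ) < 5^(1+j+1) - 3^(1+j+1) := Wden_pos (by omega)
  have h3 : 0 < 3 * W (1+j) + 5 := by have := W_pos (n := 1+j) (by omega); linarith
  rw [eq_div_iff (ne_of_gt h3)]
  unfold W
  simp only [Nat.add_sub_cancel, show 1+j+1-1 = j+1 by omega, show 1+j-1 = j by omega]
  field_simp
  ring

noncomputable def subB (k : ℕ) (c : Fin 3 → ℝ) (i : Fin 3) : Fin 3 → ℝ := fun q =>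
  if q = i then c i
  else ((3*W k+2) * c i + c q + 2 * c (-(i+q))) / (3*W k+5)

noncomputable def Ham : (n : ℕ) → (Fin 3 → ℝ) → (Fin n → Fin 3) → ℝ
  | 0, c, _ => c 0
  | 1, c, s => c (s 0)
  | (m+2), c, s => Ham (m+1) (subB (m+1) c (s (Fin.last (m+1)))) (Fin.init s)

lemma Ham_snoc (m : ℕ) (c : Fin 3 → ℝ) (b : Fin (m+1) → Fin 3) (i : Fin 3) :
    Ham (m+2) c (Fin.snoc b i) = Ham (m+1) (subB (m+1) c i) b := by
  show Ham (m+1) _ _ = _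
  rw [Fin.snoc_last, Fin.init_snoc]

lemma Ham_corner : ∀ (n : ℕ), 1 ≤ n → ∀ (c : Fin 3 → ℝ) (q : Fin 3),
    Ham n c (corner n q) = c q
  | 1, _, c, q => rfl
  | (m+2), _, c, q => by
    rw [corner_succ, Ham_snoc, Ham_corner (m+1) (by omega)]
    simp [subB]

lemma fin3_succ_ne : ∀ q : Fin 3, q+1 ≠ q ∧ q+2 ≠ q ∧ q+1 ≠ q+2 := by decide
lemma fin3_third1 : ∀ q : Fin 3, -(q+(q+1)) = q+2 := by decide
lemma fin3_third2 : ∀ q : Fin 3, -(q+(q+2)) = q+1 := by decide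
lemma fin3_cases : ∀ q x : Fin 3, q ≠ x → x = q+1 ∨ x = q+2 := by decide

lemma nbhd_one (q : Fin 3) : (hanoi 1).neighborFinset (corner 1 q) =
    {corner 1 (q+1), corner 1 (q+2)} := by
  ext t
  have ht : t = corner 1 (t 0) := funext fun j => by rw [Subsingleton.elim j 0]; rfl
  simp only [SimpleGraph.mem_neighborFinset, adj_one, Finset.mem_insert, Finset.mem_singleton]
  constructor
  · intro h
    rcases fin3_cases q (t 0) h with h' | h' <;> [left; right] <;>
      (conv_lhs => rw [ht]) <;> rw [h']
  · rintro (rfl | rfl)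
    · exact (fin3_succ_ne q).1.symm
    · exact (fin3_succ_ne q).2.1.symm

lemma Ham_corner_sum : ∀ (n : ℕ), 1 ≤ n → ∀ (c : Fin 3 → ℝ) (q : Fin 3),
    ∑ t ∈ (hanoi n).neighborFinset (corner n q), Ham n c t
      = (2 - 2 * W n) * c q + W n * (c (q+1) + c (q+2))
  | 1, _, c, q => by
    rw [nbhd_one, Finset.sum_pair (fun h => (fin3_succ_ne q).2.2 (congrFun h 0)), W_one]
    show c (q+1) + c (q+2) = _
    ring
  | (m+2), _, c, q => by
    have hm1 : 1 ≤ m + 1 := by omega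
    rw [nbhd_corner (m+1) hm1 q,
      Finset.sum_image (fun x _ y _ h => snoc_inj (m+1) q h)]
    simp only [Ham_snoc]
    rw [Ham_corner_sum (m+1) hm1]
    have hW := W_pos hm1
    have e0 : subB (m+1) c q q = c q := by simp [subB]
    have e1 : subB (m+1) c q (q+1)
        = ((3*W (m+1)+2) * c q + c (q+1) + 2 * c (q+2)) / (3*W (m+1)+5) := by
      rw [subB, if_neg (fin3_succ_ne q).1, fin3_third1]
    have e2 : subB (m+1) c q (q+2)
        = ((3*W (m+1)+2) * c q + c (q+2) + 2 * c (q+1)) / (3*W (m+1)+5) := by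
      rw [subB, if_neg (fin3_succ_ne q).2.1, fin3_third2]
    rw [e0, e1, e2, W_rec hm1]
    have h5 : 3 * W (m+1) + 5 ≠ 0 := by linarith
    field_simp
    ring

lemma deg_corner : ∀ (n : ℕ), 1 ≤ n → ∀ q : Fin 3, (hanoi n).degree (corner n q) = 2
  | 1, _, q => by
    rw [SimpleGraph.degree, nbhd_one]
    rw [Finset.card_pair (fun h => (fin3_succ_ne q).2.2 (congrFun h 0))]
  | (m+2), _, q => by
    rw [SimpleGraph.degree, nbhd_corner (m+1) (by omega) q,
      Finset.card_image_of_injective _ (snoc_inj (m+1) q)]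
    exact deg_corner (m+1) (by omega) q

lemma fin3_ne21 : ∀ q : Fin 3, q+2 ≠ q+1 := by decide
lemma fin3_t1 : ∀ q : Fin 3, -((q+1)+q) = q+2 := by decide
lemma fin3_t2 : ∀ q : Fin 3, -((q+2)+q) = q+1 := by decide
lemma fin3_t3 : ∀ q : Fin 3, -((q+1)+(q+2)) = q := by decide
lemma fin3_t4 : ∀ q : Fin 3, -((q+2)+(q+1)) = q := by decide

lemma Ham_harmonic : ∀ (n : ℕ) (c : Fin 3 → ℝ) (s : Fin n → Fin 3),
    (∀ q, s ≠ corner n q) →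
    ((hanoi n).degree s : ℝ) * Ham n c s = ∑ t ∈ (hanoi n).neighborFinset s, Ham n c t
  | 0, c, s, hs => absurd (funext fun j => j.elim0) (hs 0)
  | 1, c, s, hs => absurd (funext fun j => by rw [Subsingleton.elim j 0]; rfl) (hs (s 0))
  | (m+2), c, s, hs => by
    have hss : s = Fin.snoc (Fin.init s) (s (Fin.last (m+1))) := (Fin.snoc_init_self s).symm
    set i := s (Fin.last (m+1)) with hi
    by_cases hb : ∀ q, Fin.init s ≠ corner (m+1) q
    · -- interior case
      rw [SimpleGraph.degree, nbhd_interior (m+1) s hb,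
        Finset.card_image_of_injective _ (snoc_inj (m+1) i),
        Finset.sum_image (fun x _ y _ h => snoc_inj (m+1) i h)]
      simp only [Ham_snoc]
      have : Ham (m+2) c s = Ham (m+1) (subB (m+1) c i) (Fin.init s) := by
        conv_lhs => rw [hss, Ham_snoc]
      rw [this]
      exact Ham_harmonic (m+1) _ _ hb
    · push_neg at hb
      obtain ⟨q, hq⟩ := hb
      have hiq : i ≠ q := by
        intro h
        exact hs q (by rw [hss, hq, h, ← corner_succ])
      have hs2 : s = Fin.snoc (corner (m+1) q) i := by rw [hss, hq]
      have hnm := snoc_third_not_mem (m+1) q i hiq ((hanoi (m+1)).neighborFinset (corner (m+1) q))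
      rw [hs2, SimpleGraph.degree, nbhd_subcorner (m+1) (by omega) q i hiq,
        Finset.card_insert_of_notMem hnm, Finset.sum_insert hnm,
        Finset.card_image_of_injective _ (snoc_inj (m+1) i),
        Finset.sum_image (fun x _ y _ h => snoc_inj (m+1) i h)]
      simp only [Ham_snoc]
      rw [Ham_corner (m+1) (by omega), Ham_corner (m+1) (by omega),
        Ham_corner_sum (m+1) (by omega),
        show ((hanoi (m+1)).neighborFinset (corner (m+1) q)).card = 2 from
          deg_corner (m+1) (by omega) q]
      have hW := W_pos (n := m+1) (by omega)
      have h5 : 3 * W (m+1) + 5 ≠ 0 := by linarith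
      push_cast
      rcases fin3_cases q i (Ne.symm hiq) with h' | h'
      · -- i = q+1, third = q+2
        rw [h']
        rw [show subB (m+1) c (q+1) q
            = ((3*W (m+1)+2) * c (q+1) + c q + 2 * c (q+2)) / (3*W (m+1)+5) by
          rw [subB, if_neg (Ne.symm (fin3_succ_ne q).1), fin3_t1]]
        rw [show subB (m+1) c (-((q+1)+q)) q
            = ((3*W (m+1)+2) * c (q+2) + c q + 2 * c (q+1)) / (3*W (m+1)+5) by
          rw [fin3_t1, subB, if_neg (Ne.symm (fin3_succ_ne q).2.1), fin3_t2]]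
        rw [show subB (m+1) c (q+1) (q+1) = c (q+1) by simp [subB]]
        rw [show subB (m+1) c (q+1) (q+2)
            = ((3*W (m+1)+2) * c (q+1) + c (q+2) + 2 * c q) / (3*W (m+1)+5) by
          rw [subB, if_neg (fin3_ne21 q), fin3_t3]]
        field_simp
        ring
      · -- i = q+2, third = q+1
        rw [h']
        rw [show subB (m+1) c (q+2) q
            = ((3*W (m+1)+2) * c (q+2) + c q + 2 * c (q+1)) / (3*W (m+1)+5) by
          rw [subB, if_neg (Ne.symm (fin3_succ_ne q).2.1), fin3_t2]]
        rw [show subB (m+1) c (-((q+2)+q)) q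
            = ((3*W (m+1)+2) * c (q+1) + c q + 2 * c (q+2)) / (3*W (m+1)+5) by
          rw [fin3_t2, subB, if_neg (Ne.symm (fin3_succ_ne q).1), fin3_t1]]
        rw [show subB (m+1) c (q+2) (q+1)
            = ((3*W (m+1)+2) * c (q+2) + c (q+1) + 2 * c q) / (3*W (m+1)+5) by
          rw [subB, if_neg (fin3_succ_ne q).2.2, fin3_t4]]
        rw [show subB (m+1) c (q+2) (q+2) = c (q+2) by simp [subB]]
        field_simp
        ring


/-- the probability `p₂(n)` that the random walk started at `A`, after at
least one move, first returns to the corner set at `C` equals `3^(n−1)/(5^n − 3^n)`. -/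
theorem hanoi_p_two (n : ℕ) (hn : 1 ≤ n)
    (p : (Fin n → Fin 3) → ℝ)
    (hC : p (corner n 2) = 1) (hA : p (corner n 0) = 0) (hB : p (corner n 1) = 0)
    (hrec : ∀ s, (∀ q : Fin 3, s ≠ corner n q) →
      p s = (1 / ((hanoi n).degree s : ℝ)) * ∑ t ∈ (hanoi n).neighborFinset s, p t) :
    (1 / 2 : ℝ) * ∑ t ∈ (hanoi n).neighborFinset (corner n 0), p t
      = (3 : ℝ) ^ (n - 1) / ((5 : ℝ) ^ n - 3 ^ n) := by
  classical
  set c : Fin 3 → ℝ := fun i => if i = 2 then 1 else 0 with hc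
  set r : (Fin n → Fin 3) → ℝ := fun s => p s - Ham n c s with hr
  have hrc : ∀ q : Fin 3, r (corner n q) = 0 := by
    intro q
    fin_cases q <;>
      simp [hr, Ham_corner n hn, hA, hB, hC, hc]
  have hp : ∀ s, (∀ q : Fin 3, s ≠ corner n q) →
      ((hanoi n).degree s : ℝ) * p s = ∑ t ∈ (hanoi n).neighborFinset s, p t := by
    intro s hcor
    have hd := hrec s hcor
    by_cases h0 : ((hanoi n).degree s : ℝ) = 0
    · have hdeg : (hanoi n).degree s = 0 := by exact_mod_cast h0
      have hemp : (hanoi n).neighborFinset s = ∅ := Finset.card_eq_zero.mp hdeg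
      rw [hemp, Finset.sum_empty, h0, zero_mul]
    · rw [hd]
      field_simp
  have hrsum : ∀ s, ∑ t ∈ (hanoi n).neighborFinset s, r t
      = (∑ t ∈ (hanoi n).neighborFinset s, p t)
        - ∑ t ∈ (hanoi n).neighborFinset s, Ham n c t := by
    intro s
    rw [← Finset.sum_sub_distrib]
  have key : ∀ s, r s * (((hanoi n).degree s : ℝ) * r s
      - ∑ t ∈ (hanoi n).neighborFinset s, r t) = 0 := by
    intro s
    by_cases hcor : ∀ q : Fin 3, s ≠ corner n q
    · have h1 := hp s hcor
      have h2 := Ham_harmonic n c s hcor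
      have hb : ((hanoi n).degree s : ℝ) * r s
          - ((∑ t ∈ (hanoi n).neighborFinset s, p t)
            - ∑ t ∈ (hanoi n).neighborFinset s, Ham n c t) = 0 := by
        have hrr : r s = p s - Ham n c s := rfl
        rw [hrr, mul_sub, h1, h2]
        ring
      rw [hrsum, hb, mul_zero]
    · push_neg at hcor
      obtain ⟨q, rfl⟩ := hcor
      rw [hrc q, zero_mul]
  -- energy identity
  have expand : ∀ s, ∑ t ∈ (hanoi n).neighborFinset s, (r s - r t)^2
      = (((hanoi n).degree s : ℝ) * r s^2
          - 2 * r s * ∑ t ∈ (hanoi n).neighborFinset s, r t)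
        + ∑ t ∈ (hanoi n).neighborFinset s, (r t)^2 := by
    intro s
    have : ∀ t, (r s - r t)^2 = r s^2 - 2 * r s * r t + (r t)^2 := fun t => by ring
    simp only [this]
    rw [Finset.sum_add_distrib, Finset.sum_sub_distrib, Finset.sum_const, ← Finset.mul_sum,
      nsmul_eq_mul]
    rfl
  have swap : ∑ s : Fin n → Fin 3, ∑ t ∈ (hanoi n).neighborFinset s, (r t)^2
      = ∑ s : Fin n → Fin 3, ((hanoi n).degree s : ℝ) * r s^2 := by
    rw [Finset.sum_comm' (t := fun s => (hanoi n).neighborFinset s)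
      (s' := fun t => (hanoi n).neighborFinset t) (t' := Finset.univ)
      (fun x y => by
        simp only [Finset.mem_univ, true_and, and_true, SimpleGraph.mem_neighborFinset]
        exact (hanoi n).adj_comm x y)]
    refine Finset.sum_congr rfl fun t _ => ?_
    rw [Finset.sum_const, nsmul_eq_mul]
    rfl
  have hE : ∑ s : Fin n → Fin 3, ∑ t ∈ (hanoi n).neighborFinset s, (r s - r t)^2 = 0 := by
    calc ∑ s : Fin n → Fin 3, ∑ t ∈ (hanoi n).neighborFinset s, (r s - r t)^2
        = ∑ s : Fin n → Fin 3, ((((hanoi n).degree s : ℝ) * r s^2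
            - 2 * r s * ∑ t ∈ (hanoi n).neighborFinset s, r t)
          + ∑ t ∈ (hanoi n).neighborFinset s, (r t)^2) :=
          Finset.sum_congr rfl fun s _ => expand s
      _ = (∑ s : Fin n → Fin 3, (((hanoi n).degree s : ℝ) * r s^2
            - 2 * r s * ∑ t ∈ (hanoi n).neighborFinset s, r t))
          + ∑ s : Fin n → Fin 3, ∑ t ∈ (hanoi n).neighborFinset s, (r t)^2 :=
          Finset.sum_add_distrib
      _ = ∑ s : Fin n → Fin 3, 2 * (r s * (((hanoi n).degree s : ℝ) * r s
            - ∑ t ∈ (hanoi n).neighborFinset s, r t)) := by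
          rw [swap, ← Finset.sum_add_distrib]
          exact Finset.sum_congr rfl fun s _ => by ring
      _ = 0 := Finset.sum_eq_zero fun s _ => by rw [key s, mul_zero]
  have houter := (Finset.sum_eq_zero_iff_of_nonneg
    (fun s _ => Finset.sum_nonneg fun t _ => sq_nonneg _)).mp hE
  have hinner := (Finset.sum_eq_zero_iff_of_nonneg
    (fun t _ => sq_nonneg _)).mp (houter (corner n 0) (Finset.mem_univ _))
  have hpt : ∀ t ∈ (hanoi n).neighborFinset (corner n 0), p t = Ham n c t := by
    intro t ht
    have h0 := hinner t ht
    have := pow_eq_zero_iff (n := 2) (by norm_num) |>.mp h0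
    have h1 : r t = r (corner n 0) := by linarith [sub_eq_zero.mp this]
    have h2 : r t = 0 := by rw [h1, hrc]
    have : p t - Ham n c t = 0 := h2
    linarith
  rw [Finset.sum_congr rfl hpt, Ham_corner_sum n hn c 0]
  have hc0 : c 0 = 0 := rfl
  have hc1 : c (0+1 : Fin 3) = 0 := rfl
  have hc2 : c (0+2 : Fin 3) = 1 := rfl
  rw [hc0, hc1, hc2, W]
  ring
end

section
/- Let n ≥ 1 and let p : (Fin n → Fin 3) → ℝ satisfy p(A) = 1, p(B) = p(C) = 0, and p(s) = (1/deg s)·Σ_{t adjacent to s} p(t) for every non-corner state s of the Hanoi graph H_n. Then p(s½) = (5^(n−1) − 3^(n−1))/(5^n − 3^n). (This is q₁(n), the probability that the random walk started with the largest disk on the second peg and the rest on the first peg ends with all disks on the first peg.) -/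
namespace HanoiAux

lemma corner_succ (m : ℕ) (q : Fin 3) :
    corner (m + 1) q = Fin.snoc (corner m q) q := by
  funext j
  refine Fin.lastCases ?_ (fun i => ?_) j
  · simp [corner]
  · simp [corner]

lemma snoc_injective (m : ℕ) (d : Fin 3) :
    Function.Injective (fun s : V m => (Fin.snoc s d : V (m+1))) := by
  intro s t h
  funext j
  have := congrFun h (Fin.castSucc j)
  simpa using this

lemma adj_snoc_same (m : ℕ) (s t : V m) (d : Fin 3) :
    (hanoi (m+1)).Adj (Fin.snoc s d) (Fin.snoc t d) ↔ (hanoi m).Adj s t := by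
  constructor
  · rintro ⟨k, h1, h2, h3⟩
    have hk : k ≠ Fin.last m := by
      rintro rfl; simp at h2
    obtain ⟨k', rfl⟩ := Fin.exists_castSucc_eq.mpr hk
    refine ⟨k', fun j hj => ?_, ?_, fun j hj => ?_⟩
    · have := h1 (Fin.castSucc j) (by simpa using hj)
      simpa using this
    · simpa using h2
    · have := h3 (Fin.castSucc j) (by simpa using hj)
      simpa using this
  · rintro ⟨k, h1, h2, h3⟩
    refine ⟨Fin.castSucc k, fun j hj => ?_, by simpa using h2, fun j hj => ?_⟩
    · by_cases hj' : j = Fin.last m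
      · subst hj'; simp
      · obtain ⟨j', rfl⟩ := Fin.exists_castSucc_eq.mpr hj'
        have : j' ≠ k := fun h => hj (by rw [h])
        simpa using h1 j' this
    · have hj' : j ≠ Fin.last m := by
        intro h; subst h
        exact absurd hj (by simpa using (le_of_lt (Fin.castSucc_lt_last k)).not_gt)
      obtain ⟨j', rfl⟩ := Fin.exists_castSucc_eq.mpr hj'
      have := h3 j' (by simpa using hj)
      simpa using this

lemma adj_snoc_ne (m : ℕ) (s t : V m) (d d' : Fin 3) (h : d ≠ d') :
    (hanoi (m+1)).Adj (Fin.snoc s d) (Fin.snoc t d') ↔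
      s = t ∧ ∀ j, s j ≠ d ∧ s j ≠ d' := by
  constructor
  · rintro ⟨k, h1, h2, h3⟩
    have hk : k = Fin.last m := by
      by_contra hk
      have := h1 (Fin.last m) (Ne.symm hk)
      simp at this
      exact h this
    subst hk
    constructor
    · funext j
      have := h1 (Fin.castSucc j) (Fin.castSucc_lt_last j).ne
      simpa using this
    · intro j
      have := h3 (Fin.castSucc j) (Fin.castSucc_lt_last j)
      simpa using this
  · rintro ⟨rfl, hcond⟩
    refine ⟨Fin.last m, fun j hj => ?_, by simpa using h, fun j hj => ?_⟩
    · obtain ⟨j', rfl⟩ := Fin.exists_castSucc_eq.mpr hj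
      simp
    · obtain ⟨j', rfl⟩ := Fin.exists_castSucc_eq.mpr hj.ne
      simpa using hcond j'

lemma adj_corner (m : ℕ) (q : Fin 3) (t : V (m+1)) :
    (hanoi (m+1)).Adj (corner (m+1) q) t ↔
      ∃ r, r ≠ q ∧ t = Function.update (corner (m+1) q) 0 r := by
  constructor
  · rintro ⟨k, h1, h2, h3⟩
    have hk : k = 0 := by
      by_contra hk
      exact (h3 0 (Fin.pos_of_ne_zero hk)).1 rfl
    subst hk
    refine ⟨t 0, Ne.symm h2, ?_⟩
    funext j
    by_cases hj : j = 0
    · subst hj; simp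
    · rw [Function.update_of_ne hj]
      exact (h1 j hj).symm
  · rintro ⟨r, hr, rfl⟩
    refine ⟨0, fun j hj => ?_, ?_, fun j hj => ?_⟩
    · rw [Function.update_of_ne hj]
    · simpa [corner] using fun h => hr h.symm
    · exact absurd hj (by simp [Fin.lt_def])

lemma D1 : ∀ q r : Fin 3, r ≠ q ↔ (r = q + 1 ∨ r = q + 2) := by decide
lemma D2 : ∀ q : Fin 3, q + 1 ≠ q + 2 := by decide
lemma D3 : ∀ d r x : Fin 3, d ≠ r → x ≠ d → x ≠ r → x = -(d + r) := by decide
lemma D4 : ∀ d r : Fin 3, d ≠ r → -(d + r) ≠ d ∧ -(d + r) ≠ r ∧ d ≠ -(d+r) ∧ r ≠ -(d+r) := by decide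
lemma D5 : ∀ d d' x y : Fin 3, d ≠ d' → x ≠ d → x ≠ d' → y ≠ d → y ≠ d' → x = y := by decide

lemma nbr_corner (m : ℕ) (q : Fin 3) :
    (hanoi (m+1)).neighborFinset (corner (m+1) q) =
      {Function.update (corner (m+1) q) 0 (q+1), Function.update (corner (m+1) q) 0 (q+2)} := by
  ext t
  simp only [SimpleGraph.mem_neighborFinset, adj_corner, Finset.mem_insert, Finset.mem_singleton]
  constructor
  · rintro ⟨r, hr, rfl⟩
    rcases (D1 q r).mp hr with h | h <;> [left; right] <;> rw [h]
  · rintro (rfl | rfl)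
    · exact ⟨q + 1, (D1 q (q+1)).mpr (Or.inl rfl), rfl⟩
    · exact ⟨q + 2, (D1 q (q+2)).mpr (Or.inr rfl), rfl⟩

lemma upd_ne (m : ℕ) (q : Fin 3) :
    Function.update (corner (m+1) q) 0 (q+1) ≠ Function.update (corner (m+1) q) 0 (q+2) := by
  intro h
  have h0 := congrFun h 0
  rw [Function.update_self, Function.update_self] at h0
  exact D2 q h0

lemma sum_nbr_corner (m : ℕ) (q : Fin 3) (f : V (m+1) → ℝ) :
    ∑ t ∈ (hanoi (m+1)).neighborFinset (corner (m+1) q), f t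
      = f (Function.update (corner (m+1) q) 0 (q+1))
        + f (Function.update (corner (m+1) q) 0 (q+2)) := by
  rw [nbr_corner, Finset.sum_pair (upd_ne m q)]

lemma card_nbr_corner (m : ℕ) (q : Fin 3) :
    ((hanoi (m+1)).neighborFinset (corner (m+1) q)).card = 2 := by
  rw [nbr_corner, Finset.card_pair (upd_ne m q)]

lemma noncorner_snoc (m : ℕ) (s : V (m+1)) (d : Fin 3)
    (hs : ∀ r, s ≠ corner (m+1) r) : ∀ r, (Fin.snoc s d : V (m+2)) ≠ corner (m+2) r := by
  intro r h
  apply hs r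
  funext j
  have := congrFun h (Fin.castSucc j)
  simpa [corner] using this

lemma nbr_snoc_noncorner (m : ℕ) (s : V (m+1)) (d : Fin 3)
    (hs : ∀ r, s ≠ corner (m+1) r) :
    (hanoi (m+2)).neighborFinset (Fin.snoc s d) =
      ((hanoi (m+1)).neighborFinset s).image (fun t => Fin.snoc t d) := by
  ext t
  simp only [SimpleGraph.mem_neighborFinset, Finset.mem_image]
  constructor
  · intro hadj
    have ht : t = Fin.snoc (Fin.init t) (t (Fin.last (m+1))) := (Fin.snoc_init_self t).symm
    by_cases hd : t (Fin.last (m+1)) = d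
    · refine ⟨Fin.init t, ?_, by rw [← hd, Fin.snoc_init_self]⟩
      rw [ht, hd] at hadj
      exact (adj_snoc_same _ _ _ _).mp hadj
    · exfalso
      rw [ht] at hadj
      obtain ⟨_, hcond⟩ := (adj_snoc_ne _ _ _ _ _ (fun h => hd h.symm)).mp hadj
      apply hs (s 0)
      funext j
      exact D5 d (t (Fin.last (m+1))) (s j) (s 0) (fun h => hd h.symm)
        (hcond j).1 (hcond j).2 (hcond 0).1 (hcond 0).2
  · rintro ⟨t', hadj, rfl⟩
    exact (adj_snoc_same _ _ _ _).mpr hadj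

lemma noncorner_bridge (m : ℕ) (d r : Fin 3) (hdr : d ≠ r) :
    ∀ x, (Fin.snoc (corner (m+1) r) d : V (m+2)) ≠ corner (m+2) x := by
  intro x h
  have h1 : d = x := by simpa [corner] using congrFun h (Fin.last (m+1))
  have h2 := congrFun h (Fin.castSucc 0)
  rw [Fin.snoc_castSucc] at h2
  exact hdr (h1.trans (show r = x from h2).symm)

lemma nbr_bridge (m : ℕ) (d r : Fin 3) (hdr : d ≠ r) :
    (hanoi (m+2)).neighborFinset (Fin.snoc (corner (m+1) r) d) =
      insert (Fin.snoc (corner (m+1) r) (-(d+r)) : V (m+2))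
        (((hanoi (m+1)).neighborFinset (corner (m+1) r)).image (fun t => Fin.snoc t d)) := by
  obtain ⟨hd4a, hd4b, hd4c, hd4d⟩ := D4 d r hdr
  ext t
  simp only [SimpleGraph.mem_neighborFinset, Finset.mem_insert, Finset.mem_image]
  have ht : t = Fin.snoc (Fin.init t) (t (Fin.last (m+1))) := (Fin.snoc_init_self t).symm
  constructor
  · intro hadj
    by_cases hd : t (Fin.last (m+1)) = d
    · refine Or.inr ⟨Fin.init t, ?_, by rw [← hd, Fin.snoc_init_self]⟩
      rw [ht, hd] at hadj
      exact (adj_snoc_same _ _ _ _).mp hadj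
    · left
      rw [ht] at hadj
      obtain ⟨hst, hcond⟩ := (adj_snoc_ne _ _ _ _ _ (fun h => hd h.symm)).mp hadj
      have hlast : t (Fin.last (m+1)) = -(d + r) := by
        have h2 : (corner (m+1) r) 0 ≠ t (Fin.last (m+1)) := (hcond 0).2
        exact D3 d r _ hdr hd (Ne.symm h2)
      rw [ht, ← hst, hlast]
  · rintro (rfl | ⟨t', hadj, rfl⟩)
    · exact (adj_snoc_ne _ _ _ _ _ hd4c).mpr ⟨rfl, fun j => ⟨Ne.symm hdr, hd4d⟩⟩
    · exact (adj_snoc_same _ _ _ _).mpr hadj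

lemma bridge_notmem (m : ℕ) (d r : Fin 3) (hdr : d ≠ r) :
    (Fin.snoc (corner (m+1) r) (-(d+r)) : V (m+2)) ∉
      ((hanoi (m+1)).neighborFinset (corner (m+1) r)).image (fun t => Fin.snoc t d) := by
  obtain ⟨hd4a, _, _, _⟩ := D4 d r hdr
  intro h
  obtain ⟨t', _, ht'⟩ := Finset.mem_image.mp h
  have : -(d + r) = d := by simpa using (congrFun ht' (Fin.last (m+1))).symm
  exact hd4a this

lemma degree_eq_card (n : ℕ) (s : V n) :
    (hanoi n).degree s = ((hanoi n).neighborFinset s).card :=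
  ((hanoi n).card_neighborFinset_eq_degree s).symm
def Harm (n : ℕ) (p : V n → ℝ) : Prop :=
  ∀ s, (∀ q : Fin 3, s ≠ corner n q) →
    p s = (1 / ((hanoi n).degree s : ℝ)) * ∑ t ∈ (hanoi n).neighborFinset s, p t

lemma restrict_harm (m : ℕ) (p : V (m+2) → ℝ) (hp : Harm (m+2) p) (d : Fin 3) :
    Harm (m+1) (fun s => p (Fin.snoc s d)) := by
  intro s hs
  have h := hp (Fin.snoc s d) (noncorner_snoc m s d hs)
  rw [nbr_snoc_noncorner m s d hs] at h
  rw [Finset.sum_image (fun x _ y _ h => snoc_injective (m+1) d h)] at h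
  rw [degree_eq_card, nbr_snoc_noncorner m s d hs,
    Finset.card_image_of_injective _ (snoc_injective (m+1) d), ← degree_eq_card] at h
  exact h

lemma bridge_eq (m : ℕ) (p : V (m+2) → ℝ) (hp : Harm (m+2) p) (d r : Fin 3) (hdr : d ≠ r) :
    3 * p (Fin.snoc (corner (m+1) r) d) =
      (∑ t ∈ (hanoi (m+1)).neighborFinset (corner (m+1) r), p (Fin.snoc t d))
        + p (Fin.snoc (corner (m+1) r) (-(d+r))) := by
  have h := hp (Fin.snoc (corner (m+1) r) d) (noncorner_bridge m d r hdr)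
  rw [nbr_bridge m d r hdr, Finset.sum_insert (bridge_notmem m d r hdr),
    Finset.sum_image (fun x _ y _ h => snoc_injective (m+1) d h)] at h
  have hdeg : ((hanoi (m+2)).degree (Fin.snoc (corner (m+1) r) d) : ℝ) = 3 := by
    rw [degree_eq_card, nbr_bridge m d r hdr,
      Finset.card_insert_of_notMem (bridge_notmem m d r hdr),
      Finset.card_image_of_injective _ (snoc_injective (m+1) d), card_nbr_corner]
    norm_num
  rw [hdeg] at h
  linarith [h]

noncomputable def B (m : ℕ) : ℝ := 2 * 3 ^ m / (5 ^ (m + 1) - 3 ^ (m + 1))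

lemma den_pos (m : ℕ) : (0 : ℝ) < 5 ^ (m + 1) - 3 ^ (m + 1) := by
  have : (3 : ℝ) ^ (m+1) < 5 ^ (m+1) :=
    pow_lt_pow_left₀ (by norm_num) (by norm_num) (Nat.succ_ne_zero m)
  linarith

lemma B_pos (m : ℕ) : 0 < B m := div_pos (by positivity) (den_pos m)

lemma B_rec (m : ℕ) : B (m + 1) * (5 + 3 * B m) = 3 * B m := by
  have h1 := (den_pos m).ne'
  have h2 := (den_pos (m+1)).ne'
  rw [B, B]
  field_simp
  ring

lemma sys (β a b c u01 u02 u12 u10 u20 u21 : ℝ) (hβ : 0 < β)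
    (e1 : (1+2*β)*u01 = β*(a+u02) + u21)
    (e2 : (1+2*β)*u02 = β*(a+u01) + u12)
    (e3 : (1+2*β)*u12 = β*(b+u10) + u02)
    (e4 : (1+2*β)*u10 = β*(b+u12) + u20)
    (e5 : (1+2*β)*u20 = β*(c+u21) + u10)
    (e6 : (1+2*β)*u21 = β*(c+u20) + u01) :
    (5+3*β)*u01 = (2+3*β)*a + b + 2*c := by
  have h2 : β * (2 + 3*β) ≠ 0 := by positivity
  apply mul_left_cancel₀ h2
  linear_combination (3+9*β+6*β^2)*e1 + (1+3*β+3*β^2)*e2 + (1+2*β)*e3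
    + (1+β)*e4 + (1+2*β)*e5 + (3+4*β)*e6

lemma assemble (β a b c u01 u02 u12 u10 u20 u21 : ℝ) (hβ : 0 < β) (β' : ℝ)
    (hB' : β' * (5 + 3*β) = 3*β)
    (e01 : (1+2*β)*u01 = β*(a+u02) + u21)
    (e02 : (1+2*β)*u02 = β*(a+u01) + u12)
    (e12 : (1+2*β)*u12 = β*(b+u10) + u02)
    (e10 : (1+2*β)*u10 = β*(b+u12) + u20)
    (e20 : (1+2*β)*u20 = β*(c+u21) + u10)
    (e21 : (1+2*β)*u21 = β*(c+u20) + u01) :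
    ((2-3*β)*a + β*(a + u01 + u02) = (2-3*β')*a + β'*(a+b+c))
    ∧ ((2-3*β)*b + β*(u10 + b + u12) = (2-3*β')*b + β'*(a+b+c))
    ∧ ((2-3*β)*c + β*(u20 + u21 + c) = (2-3*β')*c + β'*(a+b+c))
    ∧ ((5+3*β)*u10 = (2+3*β)*b + a + 2*c) := by
  have h5 : (5:ℝ) + 3*β ≠ 0 := by positivity
  have v01 := sys β a b c u01 u02 u12 u10 u20 u21 hβ e01 e02 e12 e10 e20 e21
  have v02 := sys β a c b u02 u01 u21 u20 u10 u12 hβ e02 e01 e21 e20 e10 e12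
  have v12 := sys β b c a u12 u10 u20 u21 u01 u02 hβ e12 e10 e20 e21 e01 e02
  have v10 := sys β b a c u10 u12 u02 u01 u21 u20 hβ e10 e12 e02 e01 e21 e20
  have v20 := sys β c a b u20 u21 u01 u02 u12 u10 hβ e20 e21 e01 e02 e12 e10
  have v21 := sys β c b a u21 u20 u10 u12 u02 u01 hβ e21 e20 e10 e12 e02 e01
  refine ⟨?_, ?_, ?_, v10⟩
  · apply mul_left_cancel₀ h5
    linear_combination β*v01 + β*v02 + (2*a - b - c)*hB'
  · apply mul_left_cancel₀ h5
    linear_combination β*v12 + β*v10 + (2*b - a - c)*hB'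
  · apply mul_left_cancel₀ h5
    linear_combination β*v20 + β*v21 + (2*c - a - b)*hB'

lemma upd_snoc (m : ℕ) (q r : Fin 3) :
    Function.update (corner (m+2) q) 0 r
      = Fin.snoc (Function.update (corner (m+1) q) 0 r) q := by
  funext j
  refine Fin.lastCases ?_ (fun i => ?_) j
  · rw [Fin.snoc_last, Function.update_of_ne (by simp [Fin.ext_iff])]
    rfl
  · rw [Fin.snoc_castSucc]
    by_cases hi : i = 0
    · subst hi
      rw [show (Fin.castSucc (0 : Fin (m+1))) = (0 : Fin (m+2)) from rfl,
        Function.update_self, Function.update_self]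
    · rw [Function.update_of_ne (by simpa using hi), Function.update_of_ne hi]
      rfl

lemma corner_nbr_sum_snoc (m : ℕ) (q : Fin 3) (p : V (m+2) → ℝ) :
    ∑ t ∈ (hanoi (m+2)).neighborFinset (corner (m+2) q), p t
      = ∑ t ∈ (hanoi (m+1)).neighborFinset (corner (m+1) q), p (Fin.snoc t q) := by
  rw [sum_nbr_corner (m+1) q p, sum_nbr_corner m q (fun t => p (Fin.snoc t q)),
    upd_snoc, upd_snoc]

lemma fin3_add_sum (g : Fin 3 → ℝ) (q : Fin 3) :
    g (q+1) + g (q+2) = -(g q) + (g 0 + g 1 + g 2) := by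
  have h1 : q = 0 ∨ q = 1 ∨ q = 2 := by omega
  rcases h1 with rfl | rfl | rfl
  · rw [show ((0:Fin 3)+1) = 1 from rfl, show ((0:Fin 3)+2) = 2 from rfl]; ring
  · rw [show ((1:Fin 3)+1) = 2 from rfl, show ((1:Fin 3)+2) = 0 from rfl]; ring
  · rw [show ((2:Fin 3)+1) = 0 from rfl, show ((2:Fin 3)+2) = 1 from rfl]; ring

lemma master (m : ℕ) (p : V (m+2) → ℝ) (hp : Harm (m+2) p)
    (hsum : ∀ d r : Fin 3,
      ∑ t ∈ (hanoi (m+1)).neighborFinset (corner (m+1) r), p (Fin.snoc t d)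
        = (2 - 3 * B m) * p (Fin.snoc (corner (m+1) r) d)
          + B m * (p (Fin.snoc (corner (m+1) 0) d) + p (Fin.snoc (corner (m+1) 1) d)
            + p (Fin.snoc (corner (m+1) 2) d))) :
    ((2-3*B m) * p (corner (m+2) 0)
        + B m * (p (corner (m+2) 0) + p (Fin.snoc (corner (m+1) 1) 0)
          + p (Fin.snoc (corner (m+1) 2) 0))
      = (2-3*B (m+1)) * p (corner (m+2) 0)
        + B (m+1) * (p (corner (m+2) 0) + p (corner (m+2) 1) + p (corner (m+2) 2)))
    ∧ ((2-3*B m) * p (corner (m+2) 1)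
        + B m * (p (Fin.snoc (corner (m+1) 0) 1) + p (corner (m+2) 1)
          + p (Fin.snoc (corner (m+1) 2) 1))
      = (2-3*B (m+1)) * p (corner (m+2) 1)
        + B (m+1) * (p (corner (m+2) 0) + p (corner (m+2) 1) + p (corner (m+2) 2)))
    ∧ ((2-3*B m) * p (corner (m+2) 2)
        + B m * (p (Fin.snoc (corner (m+1) 0) 2) + p (Fin.snoc (corner (m+1) 1) 2)
          + p (corner (m+2) 2))
      = (2-3*B (m+1)) * p (corner (m+2) 2)
        + B (m+1) * (p (corner (m+2) 0) + p (corner (m+2) 1) + p (corner (m+2) 2)))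
    ∧ ((5+3*B m) * p (Fin.snoc (corner (m+1) 0) 1)
      = (2+3*B m) * p (corner (m+2) 1) + p (corner (m+2) 0) + 2 * p (corner (m+2) 2)) := by
  have hc0 := corner_succ (m+1) (0 : Fin 3)
  have hc1 := corner_succ (m+1) (1 : Fin 3)
  have hc2 := corner_succ (m+1) (2 : Fin 3)
  have e01 : (1+2*B m) * p (Fin.snoc (corner (m+1) 1) 0)
      = B m * (p (corner (m+2) 0) + p (Fin.snoc (corner (m+1) 2) 0))
        + p (Fin.snoc (corner (m+1) 1) 2) := by
    have h := bridge_eq m p hp 0 1 (by decide)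
    rw [hsum 0 1, show -((0:Fin 3)+1) = (2:Fin 3) from rfl, ← hc0] at h
    linear_combination h
  have e02 : (1+2*B m) * p (Fin.snoc (corner (m+1) 2) 0)
      = B m * (p (corner (m+2) 0) + p (Fin.snoc (corner (m+1) 1) 0))
        + p (Fin.snoc (corner (m+1) 2) 1) := by
    have h := bridge_eq m p hp 0 2 (by decide)
    rw [hsum 0 2, show -((0:Fin 3)+2) = (1:Fin 3) from rfl, ← hc0] at h
    linear_combination h
  have e12 : (1+2*B m) * p (Fin.snoc (corner (m+1) 2) 1)
      = B m * (p (corner (m+2) 1) + p (Fin.snoc (corner (m+1) 0) 1))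
        + p (Fin.snoc (corner (m+1) 2) 0) := by
    have h := bridge_eq m p hp 1 2 (by decide)
    rw [hsum 1 2, show -((1:Fin 3)+2) = (0:Fin 3) from rfl, ← hc1] at h
    linear_combination h
  have e10 : (1+2*B m) * p (Fin.snoc (corner (m+1) 0) 1)
      = B m * (p (corner (m+2) 1) + p (Fin.snoc (corner (m+1) 2) 1))
        + p (Fin.snoc (corner (m+1) 0) 2) := by
    have h := bridge_eq m p hp 1 0 (by decide)
    rw [hsum 1 0, show -((1:Fin 3)+0) = (2:Fin 3) from rfl, ← hc1] at h
    linear_combination h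
  have e20 : (1+2*B m) * p (Fin.snoc (corner (m+1) 0) 2)
      = B m * (p (corner (m+2) 2) + p (Fin.snoc (corner (m+1) 1) 2))
        + p (Fin.snoc (corner (m+1) 0) 1) := by
    have h := bridge_eq m p hp 2 0 (by decide)
    rw [hsum 2 0, show -((2:Fin 3)+0) = (1:Fin 3) from rfl, ← hc2] at h
    linear_combination h
  have e21 : (1+2*B m) * p (Fin.snoc (corner (m+1) 1) 2)
      = B m * (p (corner (m+2) 2) + p (Fin.snoc (corner (m+1) 0) 2))
        + p (Fin.snoc (corner (m+1) 1) 0) := by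
    have h := bridge_eq m p hp 2 1 (by decide)
    rw [hsum 2 1, show -((2:Fin 3)+1) = (0:Fin 3) from rfl, ← hc2] at h
    linear_combination h
  exact assemble (B m) (p (corner (m+2) 0)) (p (corner (m+2) 1)) (p (corner (m+2) 2))
    (p (Fin.snoc (corner (m+1) 1) 0)) (p (Fin.snoc (corner (m+1) 2) 0))
    (p (Fin.snoc (corner (m+1) 2) 1)) (p (Fin.snoc (corner (m+1) 0) 1))
    (p (Fin.snoc (corner (m+1) 0) 2)) (p (Fin.snoc (corner (m+1) 1) 2))
    (B_pos m) (B (m+1)) (B_rec m) e01 e02 e12 e10 e20 e21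

theorem keyN : ∀ (m : ℕ) (p : V (m+1) → ℝ), Harm (m+1) p → ∀ q : Fin 3,
    ∑ t ∈ (hanoi (m+1)).neighborFinset (corner (m+1) q), p t
      = (2 - 3 * B m) * p (corner (m+1) q)
        + B m * (p (corner (m+1) 0) + p (corner (m+1) 1) + p (corner (m+1) 2)) := by
  intro m
  induction m with
  | zero =>
    intro p _ q
    rw [sum_nbr_corner 0 q p]
    have hupd : ∀ r : Fin 3, Function.update (corner 1 q) 0 r = corner 1 r := by
      intro r; funext j
      have : j = 0 := Subsingleton.elim j 0
      subst this; simp [corner]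
    rw [hupd, hupd]
    have hB0 : B 0 = 1 := by norm_num [B]
    rw [hB0]
    linear_combination fin3_add_sum (fun r => p (corner 1 r)) q
  | succ m ih =>
    intro p hp q
    have hsum : ∀ d r : Fin 3,
        ∑ t ∈ (hanoi (m+1)).neighborFinset (corner (m+1) r), p (Fin.snoc t d)
          = (2 - 3 * B m) * p (Fin.snoc (corner (m+1) r) d)
            + B m * (p (Fin.snoc (corner (m+1) 0) d) + p (Fin.snoc (corner (m+1) 1) d)
              + p (Fin.snoc (corner (m+1) 2) d)) :=
      fun d r => ih (fun s => p (Fin.snoc s d)) (restrict_harm m p hp d) r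
    obtain ⟨C1, C2, C3, _⟩ := master m p hp hsum
    rw [corner_nbr_sum_snoc m q p, hsum q q]
    have h1 : q = 0 ∨ q = 1 ∨ q = 2 := by omega
    rcases h1 with rfl | rfl | rfl
    · rw [← corner_succ (m+1) (0 : Fin 3)]; exact C1
    · rw [← corner_succ (m+1) (1 : Fin 3)]; exact C2
    · rw [← corner_succ (m+1) (2 : Fin 3)]; exact C3

lemma halfState_succ (m : ℕ) :
    halfState (m+2) = Fin.snoc (corner (m+1) 0) 1 := by
  funext j
  refine Fin.lastCases ?_ (fun i => ?_) j
  · rw [Fin.snoc_last]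
    simp [halfState]
  · rw [Fin.snoc_castSucc]
    have : (Fin.castSucc i : ℕ) < m + 1 := i.isLt
    simp [halfState, corner, this]
    exact Nat.le_of_lt_succ i.isLt

end HanoiAux

/-- `q₁(n)`, the probability that the random walk started at `s½` first
meets the corner set at `A`, equals `(5^(n−1) − 3^(n−1))/(5^n − 3^n)`. -/
theorem hanoi_q_one (n : ℕ) (hn : 1 ≤ n)
    (p : (Fin n → Fin 3) → ℝ)
    (hA : p (corner n 0) = 1) (hB : p (corner n 1) = 0) (hC : p (corner n 2) = 0)
    (hrec : ∀ s, (∀ q : Fin 3, s ≠ corner n q) →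
      p s = (1 / ((hanoi n).degree s : ℝ)) * ∑ t ∈ (hanoi n).neighborFinset s, p t) :
    p (halfState n) = ((5 : ℝ) ^ (n - 1) - 3 ^ (n - 1)) / ((5 : ℝ) ^ n - 3 ^ n) := by

  open HanoiAux in
  match n, hn with
  | 1, _ =>
    have h1 : halfState 1 = corner 1 1 := by
      funext j
      simp [halfState, corner]
    rw [h1, hB]
    norm_num
  | (m+2), _ =>
    have hp : HanoiAux.Harm (m+2) p := hrec
    have hsum : ∀ d r : Fin 3,
        ∑ t ∈ (hanoi (m+1)).neighborFinset (corner (m+1) r), p (Fin.snoc t d)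
          = (2 - 3 * HanoiAux.B m) * p (Fin.snoc (corner (m+1) r) d)
            + HanoiAux.B m * (p (Fin.snoc (corner (m+1) 0) d) + p (Fin.snoc (corner (m+1) 1) d)
              + p (Fin.snoc (corner (m+1) 2) d)) :=
      fun d r => HanoiAux.keyN m (fun s => p (Fin.snoc s d)) (HanoiAux.restrict_harm m p hp d) r
    obtain ⟨_, _, _, C4⟩ := HanoiAux.master m p hp hsum
    rw [hA, hB, hC] at C4
    rw [HanoiAux.halfState_succ m]
    -- C4 : (5+3*B m) * p (snoc (corner (m+1) 0) 1) = (2+3*B m)*0 + 1 + 2*0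
    have hBpos := HanoiAux.B_pos m
    have h5 : (5:ℝ) + 3 * HanoiAux.B m ≠ 0 := by positivity
    have hP : p (Fin.snoc (corner (m+1) 0) 1) = 1 / (5 + 3 * HanoiAux.B m) := by
      field_simp
      linarith [C4]
    rw [hP]
    have hD1 := (HanoiAux.den_pos m).ne'
    have hD2 := (HanoiAux.den_pos (m+1)).ne'
    show (1:ℝ) / (5 + 3 * HanoiAux.B m)
      = ((5:ℝ) ^ (m+1) - 3 ^ (m+1)) / ((5:ℝ) ^ (m+2) - 3 ^ (m+2))
    have hD2' : ((5:ℝ) ^ (m+2) - 3 ^ (m+2)) ≠ 0 := hD2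
    rw [div_eq_div_iff h5 hD2', HanoiAux.B]
    field_simp
    ring
end
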